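/- arXiv:2402.06243 — 10 statements merged into one kernel-verified Lean document; each statement's English description precedes it below -/
import Mathlib

section
/- Let G be a finite group, let x ∈ G with x ≠ 1, let K = x^G, and suppose that K² = {1} ∪ D where D = d^G is the conjugacy class of some element d ≠ 1 of G. Then ⟨D⟩ equals the subgroup [x,G] generated by the set of commutators {x⁻¹ * g⁻¹ * x * g : g ∈ G}, and ⟨K⟩ equals the subgroup generated by {x} ∪ {x⁻¹ * g⁻¹ * x * g : g ∈ G} (i.e. ⟨K⟩ = ⟨x⟩[x,G], the normal closure of ⟨x⟩ in G). -/
open Pointwise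

/-- The conjugacy class of `x` in `G`. -/
def conjClass {G : Type*} [Group G] (x : G) : Set G :=
  {a : G | ∃ g : G, a = g⁻¹ * x * g}

/-- **Lemma 4.** If `K = x^G` is a conjugacy class of a finite group `G` with
`K² = {1} ∪ D` for a conjugacy class `D = d^G` of a non-identity element `d`, then
`⟨D⟩ = [x,G]`, the subgroup generated by the commutators `x⁻¹ * g⁻¹ * x * g`, and
`⟨K⟩ = ⟨x⟩[x,G]`, the subgroup generated by `{x}` together with those commutators. -/
theorem closure_eq_commutators
    {G : Type*} [Group G] [Fintype G] (x d : G) (hx : x ≠ 1) (hd : d ≠ 1)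
    (K D : Set G) (hK : K = conjClass x) (hD : D = conjClass d)
    (hKD : K * K = {1} ∪ D) :
    Subgroup.closure D = Subgroup.closure {a : G | ∃ g : G, a = x⁻¹ * g⁻¹ * x * g} ∧
    Subgroup.closure K =
      Subgroup.closure ({x} ∪ {a : G | ∃ g : G, a = x⁻¹ * g⁻¹ * x * g}) := by
  set C : Set G := {a : G | ∃ g : G, a = x⁻¹ * g⁻¹ * x * g} with hC
  set N := Subgroup.closure C with hN
  have hmemC : ∀ g : G, x⁻¹ * g⁻¹ * x * g ∈ N := fun g =>
    Subgroup.subset_closure ⟨g, rfl⟩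
  -- N is stable under conjugation
  have hconj : ∀ h n : G, n ∈ N → h⁻¹ * n * h ∈ N := by
    intro h n hn
    induction hn using Subgroup.closure_induction with
    | mem a ha =>
      obtain ⟨g, rfl⟩ := ha
      have key : h⁻¹ * (x⁻¹ * g⁻¹ * x * g) * h =
          (x⁻¹ * h⁻¹ * x * h)⁻¹ * (x⁻¹ * (g * h)⁻¹ * x * (g * h)) := by
        group
      rw [key]
      exact mul_mem (inv_mem (hmemC h)) (hmemC (g * h))
    | one => simpa using N.one_mem
    | mul a b _ _ ha hb =>
      have : h⁻¹ * (a * b) * h = (h⁻¹ * a * h) * (h⁻¹ * b * h) := by group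
      rw [this]; exact mul_mem ha hb
    | inv a _ ha =>
      have : h⁻¹ * a⁻¹ * h = (h⁻¹ * a * h)⁻¹ := by group
      rw [this]; exact inv_mem ha
  -- key: (x*x)⁻¹ * (x^a * x^b) ∈ N
  have hkey : ∀ a b : G, (x * x)⁻¹ * ((a⁻¹ * x * a) * (b⁻¹ * x * b)) ∈ N := by
    intro a b
    have heq : (x * x)⁻¹ * ((a⁻¹ * x * a) * (b⁻¹ * x * b)) =
        (x⁻¹ * (x⁻¹ * a⁻¹ * x * a) * x) * (x⁻¹ * b⁻¹ * x * b) := by group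
    rw [heq]
    exact mul_mem (hconj x _ (hmemC a)) (hmemC b)
  have hmemKK : ∀ e ∈ ({1} ∪ D : Set G), ∃ a b : G,
      (a⁻¹ * x * a) * (b⁻¹ * x * b) = e := by
    intro e he
    rw [← hKD] at he
    obtain ⟨u, hu, v, hv, huv⟩ := he
    obtain ⟨a, rfl⟩ := hK ▸ hu
    obtain ⟨b, rfl⟩ := hK ▸ hv
    exact ⟨a, b, huv⟩
  -- x * x ∈ N
  have hx2 : x * x ∈ N := by
    obtain ⟨a, b, hab⟩ := hmemKK 1 (Or.inl rfl)
    have := hkey a b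
    rw [hab, mul_one] at this
    simpa using inv_mem this
  -- D ⊆ N
  have hDN : D ⊆ (N : Set G) := by
    intro e he
    obtain ⟨a, b, hab⟩ := hmemKK e (Or.inr he)
    have h1 := hkey a b
    rw [hab] at h1
    have : e = (x * x) * ((x * x)⁻¹ * e) := by group
    rw [this]
    exact mul_mem hx2 h1
  -- C ⊆ closure D
  have hCD : C ⊆ (Subgroup.closure D : Set G) := by
    intro c hc
    obtain ⟨g, rfl⟩ := hc
    have h1 : x * x ∈ ({1} ∪ D : Set G) := by
      rw [← hKD]
      exact ⟨x, hK ▸ ⟨1, by group⟩, x, hK ▸ ⟨1, by group⟩, rfl⟩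
    have h2 : x * (g⁻¹ * x * g) ∈ ({1} ∪ D : Set G) := by
      rw [← hKD]
      exact ⟨x, hK ▸ ⟨1, by group⟩, g⁻¹ * x * g, hK ▸ ⟨g, rfl⟩, rfl⟩
    have hmem : ∀ e ∈ ({1} ∪ D : Set G), e ∈ Subgroup.closure D := by
      rintro e (rfl | he)
      · exact one_mem _
      · exact Subgroup.subset_closure he
    have heq : x⁻¹ * g⁻¹ * x * g = (x * x)⁻¹ * (x * (g⁻¹ * x * g)) := by group
    rw [heq]
    exact mul_mem (inv_mem (hmem _ h1)) (hmem _ h2)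
  constructor
  · apply le_antisymm
    · exact Subgroup.closure_le _ |>.mpr hDN
    · exact Subgroup.closure_le _ |>.mpr hCD
  · apply le_antisymm
    · rw [Subgroup.closure_le]
      intro k hk
      obtain ⟨g, rfl⟩ := hK ▸ hk
      have heq : g⁻¹ * x * g = x * (x⁻¹ * g⁻¹ * x * g) := by group
      rw [heq]
      exact mul_mem (Subgroup.subset_closure (Or.inl rfl))
        (Subgroup.subset_closure (Or.inr ⟨g, rfl⟩))
    · rw [Subgroup.closure_le]
      rintro a (rfl | ⟨g, rfl⟩)
      · exact Subgroup.subset_closure (hK ▸ ⟨1, by group⟩)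
      · have hxK : x ∈ Subgroup.closure K :=
          Subgroup.subset_closure (hK ▸ ⟨1, by group⟩)
        have hxg : g⁻¹ * x * g ∈ Subgroup.closure K :=
          Subgroup.subset_closure (hK ▸ ⟨g, rfl⟩)
        have heq : x⁻¹ * g⁻¹ * x * g = x⁻¹ * (g⁻¹ * x * g) := by group
        rw [heq]
        exact mul_mem (inv_mem hxK) hxg
end

section
/- Let G be a finite group, let x ∈ G with x of order 2, let K = x^G with |K| = 2, and suppose that K² = {1} ∪ D where D = d^G is the conjugacy class of some element d ≠ 1 of G. Then ⟨K⟩ is an abelian group of order 4 in which every element has order dividing 2 (i.e. ⟨K⟩ ≅ Z₂ × Z₂), and ⟨D⟩ is a subgroup of order 2 contained in the center Z(G) of G. -/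
open Pointwise

/-- **Theorem A, Case 1.a.** If `x` is an involution of a finite group `G` whose conjugacy
class `K = x^G` has size 2 and satisfies `K² = {1} ∪ D` for a conjugacy class `D = d^G` of
a non-identity element `d`, then `⟨K⟩ ≅ ℤ₂ × ℤ₂` (an abelian group of order 4 of exponent
dividing 2) and `⟨D⟩` is a subgroup of order 2 contained in the center of `G`. -/
theorem square_of_class_case_1a
    {G : Type*} [Group G] [Fintype G] (x d : G) (hx : orderOf x = 2) (hd : d ≠ 1)
    (K D : Set G) (hK : K = conjClass x) (hD : D = conjClass d)
    (hKcard : K.ncard = 2)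
    (hKD : K * K = {1} ∪ D) :
    Nat.card (Subgroup.closure K) = 4 ∧
    (∀ a ∈ Subgroup.closure K, ∀ b ∈ Subgroup.closure K, a * b = b * a) ∧
    (∀ g ∈ Subgroup.closure K, g ^ 2 = 1) ∧
    Nat.card (Subgroup.closure D) = 2 ∧
    Subgroup.closure D ≤ Subgroup.center G := by
  have hx1 : x ≠ 1 := by
    intro h; rw [h, orderOf_one] at hx; omega
  have hx2 : x * x = 1 := by
    have := pow_orderOf_eq_one x; rwa [hx, pow_two] at this
  have hxK : x ∈ K := by rw [hK]; exact ⟨1, by simp⟩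
  obtain ⟨a, b, hab, hKab⟩ := Set.ncard_eq_two.mp hKcard
  obtain ⟨y, hyx, hKxy⟩ : ∃ y, y ≠ x ∧ K = {x, y} := by
    rw [hKab] at hxK
    rcases hxK with rfl | rfl
    · exact ⟨b, fun h => hab h.symm, hKab⟩
    · exact ⟨a, fun h => hab h, by rw [hKab, Set.pair_comm]⟩
  have hyK : y ∈ K := by rw [hKxy]; exact Set.mem_insert_of_mem _ rfl
  obtain ⟨g, hg⟩ : ∃ g, y = g⁻¹ * x * g := by rw [hK] at hyK; exact hyK
  have hxinv : x⁻¹ = x := inv_eq_of_mul_eq_one_right hx2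
  have hy2 : y * y = 1 := by
    have h0 : (g⁻¹ * x * g) * (g⁻¹ * x * g) = g⁻¹ * (x * x) * g := by group
    rw [hg, h0, hx2, mul_one, inv_mul_cancel]
  have hy1 : y ≠ 1 := by
    intro h
    apply hx1
    have hgx : g⁻¹ * x * g = 1 := by rw [← hg, h]
    have h0 : x = g * (g⁻¹ * x * g) * g⁻¹ := by group
    rw [h0, hgx, mul_one, mul_inv_cancel]
  -- conjugation stabilizes K
  have hconj : ∀ a ∈ K, ∀ h : G, h⁻¹ * a * h ∈ K := by
    rw [hK]
    rintro a ⟨g, rfl⟩ h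
    exact ⟨g * h, by group⟩
  -- x and y commute
  have hc : y⁻¹ * x * y ∈ K := hconj x hxK y
  rw [hKxy] at hc
  have hcomm : x * y = y * x := by
    rcases hc with hc | hc
    · have h2 : y * (y⁻¹ * x * y) = y * x := congrArg (y * ·) hc
      rwa [show y * (y⁻¹ * x * y) = x * y from by group] at h2
    · exfalso
      apply hyx
      have h2 : y * (y⁻¹ * x * y) = y * y := congrArg (y * ·) hc
      rw [show y * (y⁻¹ * x * y) = x * y from by group, hy2] at h2
      rw [eq_inv_of_mul_eq_one_right h2, hxinv]
  have hz1 : x * y ≠ 1 := by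
    intro h
    apply hyx
    have : y = x⁻¹ := eq_inv_of_mul_eq_one_left (by rw [hcomm] at h; exact h)
    rw [this, inv_eq_of_mul_eq_one_right hx2]
  have hz2 : (x * y) * (x * y) = 1 := by
    rw [mul_assoc, ← mul_assoc y x y, ← hcomm, mul_assoc, hy2, mul_one, hx2]
  -- K * K = {1, x*y}
  have hKK : K * K = ({1, x * y} : Set G) := by
    rw [hKxy]
    ext e
    constructor
    · rintro ⟨p, hp, q, hq, rfl⟩
      rcases hp with rfl | rfl <;> rcases hq with rfl | rfl <;>
        simp_all [Set.mem_insert_iff, hx2, hy2, ← hcomm]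
    · rintro (rfl | rfl)
      · exact ⟨x, Set.mem_insert _ _, x, Set.mem_insert _ _, hx2⟩
      · exact ⟨x, Set.mem_insert _ _, y, Set.mem_insert_of_mem _ rfl, rfl⟩
  -- D = {x * y}
  have hDne1 : ∀ e ∈ D, e ≠ 1 := by
    rw [hD]
    rintro e ⟨g, rfl⟩ h
    apply hd
    have h0 : d = g * (g⁻¹ * d * g) * g⁻¹ := by group
    rw [h0, h, mul_one, mul_inv_cancel]
  have hDset : D = ({x * y} : Set G) := by
    ext e
    constructor
    · intro he
      have : e ∈ K * K := by rw [hKD]; exact Set.mem_union_right _ he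
      rw [hKK] at this
      rcases this with rfl | rfl
      · exact absurd rfl (hDne1 _ he)
      · rfl
    · rintro rfl
      have : x * y ∈ K * K := by
        rw [hKK]; exact Set.mem_insert_of_mem _ rfl
      rw [hKD] at this
      rcases this with h | h
      · exact absurd h hz1
      · exact h
  -- x*y is central
  have hzcen : x * y ∈ Subgroup.center G := by
    rw [Subgroup.mem_center_iff]
    intro g
    have hzD : x * y ∈ D := by rw [hDset]; rfl
    obtain ⟨h, hh⟩ : ∃ h, x * y = h⁻¹ * d * h := by rw [hD] at hzD; exact hzD
    have : g⁻¹ * (x * y) * g ∈ D := by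
      rw [hD]
      exact ⟨h * g, by rw [hh]; group⟩
    rw [hDset, Set.mem_singleton_iff] at this
    have h2 : g * (g⁻¹ * (x * y) * g) = g * (x * y) := congrArg (g * ·) this
    rw [show g * (g⁻¹ * (x * y) * g) = (x * y) * g from by group] at h2
    exact h2.symm
  -- order of x*y
  have hoz : orderOf (x * y) = 2 := by
    apply orderOf_eq_prime
    · rw [pow_two]; exact hz2
    · exact hz1
  -- rewriting helpers
  have hx2' : ∀ t : G, x * (x * t) = t := fun t => by rw [← mul_assoc, hx2, one_mul]
  have hy2' : ∀ t : G, y * (y * t) = t := fun t => by rw [← mul_assoc, hy2, one_mul]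
  have hyx' : ∀ t : G, y * (x * t) = x * (y * t) := fun t => by
    rw [← mul_assoc, ← hcomm, mul_assoc]
  have hyinv : y⁻¹ = y := inv_eq_of_mul_eq_one_right hy2
  have hzinv : (x * y)⁻¹ = x * y := inv_eq_of_mul_eq_one_right hz2
  -- closure K as a set
  have hset : (Subgroup.closure K : Set G) = ({1, x, y, x * y} : Set G) := by
    apply Set.Subset.antisymm
    · intro e he
      induction he using Subgroup.closure_induction with
      | mem a ha =>
        rw [hKxy] at ha
        rcases ha with rfl | rfl
        · exact Or.inr (Or.inl rfl)
        · exact Or.inr (Or.inr (Or.inl rfl))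
      | one => exact Or.inl rfl
      | mul a b ha hb iha ihb =>
        rcases iha with rfl | rfl | rfl | rfl <;> rcases ihb with rfl | rfl | rfl | rfl <;>
          simp [Set.mem_insert_iff, hx2, hy2, hx2', hy2', hyx', ← hcomm, mul_assoc]
      | inv a ha iha =>
        rcases iha with rfl | rfl | rfl | rfl <;>
          simp [hxinv, hyinv, hzinv, Set.mem_insert_iff]
    · intro e he
      rcases he with rfl | rfl | rfl | rfl
      · exact (Subgroup.closure K).one_mem
      · exact Subgroup.subset_closure hxK
      · exact Subgroup.subset_closure hyK
      · exact mul_mem (Subgroup.subset_closure hxK) (Subgroup.subset_closure hyK)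
  refine ⟨?_, ?_, ?_, ?_, ?_⟩
  · rw [← SetLike.coe_sort_coe, Nat.card_coe_set_eq, hset]
    have h1 : x * y ≠ x := fun h => hy1 (mul_eq_left.mp h)
    have h2 : x * y ≠ y := fun h => hx1 (mul_eq_right.mp h)
    have c1 : (1:G) ∉ ({x, y, x*y} : Set G) := by
      simp only [Set.mem_insert_iff, Set.mem_singleton_iff]
      push_neg
      exact ⟨fun h => hx1 h.symm, fun h => hy1 h.symm, fun h => hz1 h.symm⟩
    have c2 : x ∉ ({y, x*y} : Set G) := by
      simp only [Set.mem_insert_iff, Set.mem_singleton_iff]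
      push_neg
      exact ⟨fun h => hyx h.symm, fun h => h1 h.symm⟩
    have c3 : y ∉ ({x*y} : Set G) := fun h => h2 (Set.mem_singleton_iff.mp h).symm
    rw [Set.ncard_insert_of_notMem c1, Set.ncard_insert_of_notMem c2,
      Set.ncard_insert_of_notMem c3, Set.ncard_singleton]
  · intro a ha b hb
    have ha' : a ∈ ({1, x, y, x * y} : Set G) := hset ▸ ha
    have hb' : b ∈ ({1, x, y, x * y} : Set G) := hset ▸ hb
    rcases ha' with rfl | rfl | rfl | rfl <;> rcases hb' with rfl | rfl | rfl | rfl <;>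
      simp [hx2, hy2, hx2', hy2', hyx', ← hcomm, mul_assoc]
  · intro g hg
    have hg' : g ∈ ({1, x, y, x * y} : Set G) := hset ▸ hg
    rcases hg' with rfl | rfl | rfl | rfl <;> simp [pow_two, hx2, hy2, hz2]
  · rw [hDset, ← Subgroup.zpowers_eq_closure, Nat.card_zpowers, hoz]
  · rw [hDset]
    rw [Subgroup.closure_le]
    simpa using hzcen
end

section
/- Let G be a finite group, let x ∈ G with order of x equal to n > 2, let K = x^G with |K| = 2, and suppose that K² = {1} ∪ D where D = d^G is the conjugacy class of some element d ≠ 1 of G. Then ⟨K⟩ = ⟨x⟩ is a cyclic group of order n, and ⟨D⟩ = ⟨x²⟩ is cyclic. -/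
open Pointwise

lemma isCyclic_zpowers {G : Type*} [Group G] [Fintype G] (x : G) :
    IsCyclic (Subgroup.zpowers x) :=
  isCyclic_of_orderOf_eq_card (⟨x, Subgroup.mem_zpowers x⟩ : Subgroup.zpowers x)
    (by rw [Subgroup.orderOf_mk, Nat.card_zpowers])

/-- **Theorem A, Case 1.b.** If `x` is an element of order `n > 2` of a finite group `G`
whose conjugacy class `K = x^G` has size 2 and satisfies `K² = {1} ∪ D` for a conjugacy
class `D = d^G` of a non-identity element `d`, then `⟨K⟩ = ⟨x⟩` is cyclic of order `n`
and `⟨D⟩ = ⟨x²⟩` is cyclic. -/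
theorem square_of_class_case_1b
    {G : Type*} [Group G] [Fintype G] (x d : G) (n : ℕ)
    (hx : orderOf x = n) (hn : n > 2) (hd : d ≠ 1)
    (K D : Set G) (hK : K = conjClass x) (hD : D = conjClass d)
    (hKcard : K.ncard = 2)
    (hKD : K * K = {1} ∪ D) :
    Subgroup.closure K = Subgroup.zpowers x ∧
    Nat.card (Subgroup.closure K) = n ∧
    IsCyclic (Subgroup.closure K) ∧
    Subgroup.closure D = Subgroup.zpowers (x ^ 2) ∧
    IsCyclic (Subgroup.closure D) := by
  subst hK hD
  have hxK : x ∈ conjClass x := ⟨1, by group⟩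
  have hx2ne : x ^ 2 ≠ 1 := by
    intro h
    have h2 : orderOf x ∣ 2 := orderOf_dvd_of_pow_eq_one h
    rw [hx] at h2
    exact absurd (Nat.le_of_dvd two_pos h2) (by omega)
  have hxinv2ne : x⁻¹ ^ 2 ≠ 1 := by
    simpa [inv_pow] using inv_ne_one.mpr hx2ne
  have hxne : x ≠ x⁻¹ := by
    intro h
    apply hx2ne
    rw [pow_two]
    nth_rewrite 2 [h]
    exact mul_inv_cancel x
  -- 1 ∈ K * K, hence x⁻¹ ∈ K
  have h1 : (1 : G) ∈ conjClass x * conjClass x := by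
    rw [hKD]; exact Or.inl rfl
  rw [Set.mem_mul] at h1
  obtain ⟨a, ha, b, hb, hab⟩ := h1
  have hbinv : b = a⁻¹ := eq_inv_of_mul_eq_one_right hab
  obtain ⟨g, hg⟩ := ha
  obtain ⟨h, hh⟩ := hb
  have hxinvK : x⁻¹ ∈ conjClass x := by
    refine ⟨h * g⁻¹, ?_⟩
    have : a⁻¹ = h⁻¹ * x * h := by rw [← hbinv, hh]
    have hx' : x⁻¹ = g * a⁻¹ * g⁻¹ := by rw [hg]; group
    rw [hx', this]; group
  -- K = {x, x⁻¹}
  have hsub : ({x, x⁻¹} : Set G) ⊆ conjClass x := by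
    rintro y (rfl | rfl)
    · exact hxK
    · exact hxinvK
  have hKset : conjClass x = {x, x⁻¹} := by
    symm
    apply Set.eq_of_subset_of_ncard_le hsub
    rw [hKcard, Set.ncard_pair hxne]
  -- closure K = zpowers x
  have hclosK : Subgroup.closure (conjClass x) = Subgroup.zpowers x := by
    rw [hKset]
    apply le_antisymm
    · rw [Subgroup.closure_le]
      rintro y (rfl | rfl)
      · exact Subgroup.mem_zpowers _
      · exact inv_mem (Subgroup.mem_zpowers _)
    · exact Subgroup.zpowers_le.mpr (Subgroup.subset_closure (Or.inl rfl))
  -- D facts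
  have hx2D : x ^ 2 ∈ conjClass d := by
    have : x ^ 2 ∈ ({1} : Set G) ∪ conjClass d := by
      rw [← hKD]
      exact ⟨x, hxK, x, hxK, (pow_two x).symm⟩
    rcases this with h' | h'
    · exact absurd h' hx2ne
    · exact h'
  have hDsub : conjClass d ⊆ ({x ^ 2, x⁻¹ ^ 2} : Set G) := by
    intro y hy
    have hyne : y ≠ 1 := by
      obtain ⟨g, hg⟩ := hy
      intro h'
      apply hd
      have : g⁻¹ * d * g = 1 := by rw [← hg, h']
      calc d = g * (g⁻¹ * d * g) * g⁻¹ := by group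
        _ = 1 := by rw [this]; group
    have : y ∈ conjClass x * conjClass x := by
      rw [hKD]; exact Or.inr hy
    rw [Set.mem_mul] at this
    obtain ⟨a, ha, b, hb, hab⟩ := this
    rw [hKset] at ha hb
    rcases ha with rfl | rfl <;> rcases hb with rfl | rfl
    · exact Or.inl (by rw [← hab, pow_two])
    · exfalso; apply hyne; rw [← hab]; exact mul_inv_cancel _
    · exfalso; apply hyne; rw [← hab]; exact inv_mul_cancel _
    · exact Or.inr (by rw [← hab, pow_two]; rfl)
  have hclosD : Subgroup.closure (conjClass d) = Subgroup.zpowers (x ^ 2) := by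
    apply le_antisymm
    · rw [Subgroup.closure_le]
      intro y hy
      rcases hDsub hy with rfl | rfl
      · exact Subgroup.mem_zpowers _
      · rw [inv_pow]; exact inv_mem (Subgroup.mem_zpowers _)
    · exact Subgroup.zpowers_le.mpr (Subgroup.subset_closure hx2D)
  refine ⟨hclosK, ?_, ?_, hclosD, ?_⟩
  · rw [hclosK, Nat.card_zpowers, hx]
  · rw [hclosK]; exact isCyclic_zpowers x
  · rw [hclosD]; exact isCyclic_zpowers (x ^ 2)
end

section
/- Let G be a finite group, let x ∈ G with x of order 2, let K = x^G with |K| ≥ 3, and suppose that K² = {1} ∪ D where D = d^G is the conjugacy class of an element d of order 2. Then ⟨K⟩ and ⟨D⟩ are elementary abelian 2-groups, i.e. they are abelian and every one of their elements g satisfies g² = 1. -/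
open Pointwise

/-- **Theorem A, Case 2.a (first part).** If `x` is an involution of a finite group `G` whose
conjugacy class `K = x^G` has size at least 3 and satisfies `K² = {1} ∪ D` where `D = d^G`
is the conjugacy class of an element `d` of order 2, then `⟨K⟩` and `⟨D⟩` are elementary
abelian 2-groups. -/
theorem square_of_class_case_2a_elementary_abelian
    {G : Type*} [Group G] [Fintype G] (x d : G)
    (hx : orderOf x = 2) (hd : orderOf d = 2)
    (K D : Set G) (hK : K = conjClass x) (hD : D = conjClass d)
    (hKcard : 3 ≤ K.ncard)
    (hKD : K * K = {1} ∪ D) :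
    (∀ a ∈ Subgroup.closure K, ∀ b ∈ Subgroup.closure K, a * b = b * a) ∧
    (∀ g ∈ Subgroup.closure K, g ^ 2 = 1) ∧
    (∀ a ∈ Subgroup.closure D, ∀ b ∈ Subgroup.closure D, a * b = b * a) ∧
    (∀ g ∈ Subgroup.closure D, g ^ 2 = 1) := by
  have hx2 : x ^ 2 = 1 := by rw [← hx]; exact pow_orderOf_eq_one x
  have hd2 : d ^ 2 = 1 := by rw [← hd]; exact pow_orderOf_eq_one d
  -- every element of K is an involution (or 1)
  have hKsq : ∀ a ∈ K, a ^ 2 = 1 := by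
    rintro a ha
    rw [hK] at ha
    obtain ⟨g, rfl⟩ := ha
    have hx2' : x * x = 1 := by rw [← pow_two]; exact hx2
    simp only [pow_two, mul_assoc, mul_inv_cancel_left]
    rw [← mul_assoc x x g, hx2', one_mul, inv_mul_cancel]
  have hDsq : ∀ a ∈ D, a ^ 2 = 1 := by
    rintro a ha
    rw [hD] at ha
    obtain ⟨g, rfl⟩ := ha
    have hd2' : d * d = 1 := by rw [← pow_two]; exact hd2
    simp only [pow_two, mul_assoc, mul_inv_cancel_left]
    rw [← mul_assoc d d g, hd2', one_mul, inv_mul_cancel]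
  -- products of two elements of K square to 1
  have hKKsq : ∀ a ∈ K, ∀ b ∈ K, (a * b) ^ 2 = 1 := by
    intro a ha b hb
    have hab : a * b ∈ K * K := Set.mul_mem_mul ha hb
    rw [hKD] at hab
    rcases hab with h1 | h2
    · rw [Set.mem_singleton_iff] at h1; rw [h1]; simp
    · exact hDsq _ h2
  -- elements of K pairwise commute
  have hcommK : ∀ a ∈ K, ∀ b ∈ K, a * b = b * a := by
    intro a ha b hb
    have ha2 := hKsq a ha
    have hb2 := hKsq b hb
    have hab2 := hKKsq a ha b hb
    have hainv : a⁻¹ = a := by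
      rw [inv_eq_iff_mul_eq_one, ← pow_two]; exact ha2
    have hbinv : b⁻¹ = b := by
      rw [inv_eq_iff_mul_eq_one, ← pow_two]; exact hb2
    have : a * b = (a * b)⁻¹ :=
      eq_inv_of_mul_eq_one_left (by rw [← pow_two]; exact hab2)
    rw [this, mul_inv_rev, hainv, hbinv]
  -- closure of K is abelian
  have hstep : ∀ a ∈ Subgroup.closure K, ∀ b ∈ K, a * b = b * a := by
    intro a ha
    refine Subgroup.closure_induction (fun g hg b hb => hcommK g hg b hb)
      (fun b _ => by simp) ?_ ?_ ha
    · intro g h _ _ ihg ihh b hb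
      rw [mul_assoc, ihh b hb, ← mul_assoc, ihg b hb, mul_assoc]
    · intro g _ ihg b hb
      have := ihg b hb
      calc g⁻¹ * b = g⁻¹ * b * g * g⁻¹ := by group
        _ = g⁻¹ * (b * g) * g⁻¹ := by group
        _ = g⁻¹ * (g * b) * g⁻¹ := by rw [← this]
        _ = b * g⁻¹ := by group
  have hcommCK : ∀ a ∈ Subgroup.closure K, ∀ b ∈ Subgroup.closure K, a * b = b * a := by
    intro a ha b hb
    refine Subgroup.closure_induction (fun g hg => (hstep a ha g hg))
      (by simp) ?_ ?_ hb
    · intro g h _ _ ihg ihh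
      rw [← mul_assoc, ihg, mul_assoc, ihh, ← mul_assoc]
    · intro g _ ihg
      calc a * g⁻¹ = g⁻¹ * (g * a) * g⁻¹ := by group
        _ = g⁻¹ * (a * g) * g⁻¹ := by rw [← ihg]
        _ = g⁻¹ * a := by group
  -- squares in closure of K are 1
  have hsqCK : ∀ g ∈ Subgroup.closure K, g ^ 2 = 1 := by
    intro g hg
    refine Subgroup.closure_induction (fun a ha => hKsq a ha) (by simp) ?_ ?_ hg
    · intro a b ha hb iha ihb
      have hcomm := hcommCK a ha b hb
      have : (a * b) ^ 2 = a ^ 2 * b ^ 2 := by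
        rw [pow_two, pow_two, pow_two, mul_assoc, ← mul_assoc b a b, ← hcomm,
          mul_assoc, ← mul_assoc]
      rw [this, iha, ihb, mul_one]
    · intro a _ iha
      rw [inv_pow, iha, inv_one]
  -- D is contained in the closure of K
  have hDsub : D ⊆ (Subgroup.closure K : Set G) := by
    intro a ha
    have : a ∈ K * K := by rw [hKD]; exact Or.inr ha
    obtain ⟨u, hu, v, hv, rfl⟩ := this
    exact mul_mem (Subgroup.subset_closure hu) (Subgroup.subset_closure hv)
  have hle : Subgroup.closure D ≤ Subgroup.closure K :=
    (Subgroup.closure_le _).mpr hDsub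
  exact ⟨hcommCK, hsqCK,
    fun a ha b hb => hcommCK a (hle ha) b (hle hb),
    fun g hg => hsqCK g (hle hg)⟩
end

section
/- Let G be a finite group, let x ∈ G with x of order strictly greater than 2, let K = x^G with |K| ≥ 3, and suppose that K² = {1} ∪ D where D = d^G is the conjugacy class of some element d ≠ 1 of G. Then there exists an odd prime p such that ⟨D⟩ is an elementary abelian p-group, and moreover the order of x equals p or 2p. -/
open Pointwise

section Helpers
variable {G : Type*} [Group G]

lemma mem_conjClass_self (x : G) : x ∈ conjClass x := ⟨1, by group⟩

lemma conjClass_conj_mem {x a : G} (h : a ∈ conjClass x) (g : G) :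
    g⁻¹ * a * g ∈ conjClass x := by
  obtain ⟨k, rfl⟩ := h
  exact ⟨k * g, by group⟩

lemma conjClass_pair {x a b : G} (ha : a ∈ conjClass x) (hb : b ∈ conjClass x) :
    ∃ h : G, b = h⁻¹ * a * h := by
  obtain ⟨g, rfl⟩ := ha; obtain ⟨k, rfl⟩ := hb
  exact ⟨g⁻¹ * k, by group⟩

lemma conjClass_eq_of_mem {x a : G} (h : a ∈ conjClass x) :
    conjClass a = conjClass x := by
  obtain ⟨g, rfl⟩ := h
  ext b; constructor
  · rintro ⟨k, rfl⟩; exact ⟨g * k, by group⟩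
  · rintro ⟨k, rfl⟩; exact ⟨g⁻¹ * k, by group⟩

lemma orderOf_conj' (a g : G) : orderOf (g⁻¹ * a * g) = orderOf a := by
  have := orderOf_injective (MulAut.conj g⁻¹).toMonoidHom (MulEquiv.injective _) a
  simpa [MulAut.conj] using this

end Helpers

/-- **Theorem A, Case 2.b.** If `x` is an element of order greater than 2 of a finite group
`G` whose conjugacy class `K = x^G` has size at least 3 and satisfies `K² = {1} ∪ D` for a
conjugacy class `D = d^G` of a non-identity element `d`, then there exists an odd prime `p`
such that `⟨D⟩` is an elementary abelian `p`-group and the order of `x` is `p` or `2p`. -/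
theorem square_of_class_case_2b
    {G : Type*} [Group G] [Fintype G] (x d : G)
    (hx : 2 < orderOf x) (hd : d ≠ 1)
    (K D : Set G) (hK : K = conjClass x) (hD : D = conjClass d)
    (hKcard : 3 ≤ K.ncard)
    (hKD : K * K = {1} ∪ D) :
    ∃ p : ℕ, p.Prime ∧ Odd p ∧
      (∀ a ∈ Subgroup.closure D, ∀ b ∈ Subgroup.closure D, a * b = b * a) ∧
      (∀ g ∈ Subgroup.closure D, g ^ p = 1) ∧
      (orderOf x = p ∨ orderOf x = 2 * p) := by
  classical
  -- ## Basic facts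
  have hx1 : x ≠ 1 := by
    intro h; rw [h, orderOf_one] at hx; omega
  have hxx1 : x * x ≠ 1 := by
    intro h
    have h2 : x ^ 2 = 1 := by rw [pow_two]; exact h
    have := Nat.le_of_dvd (by norm_num) (orderOf_dvd_of_pow_eq_one h2)
    omega
  have hxK : x ∈ K := hK ▸ mem_conjClass_self x
  have hKconj : ∀ a ∈ K, ∀ g : G, g⁻¹ * a * g ∈ K := by
    intro a ha g; rw [hK] at ha ⊢; exact conjClass_conj_mem ha g
  have hmulK : ∀ a ∈ K, ∀ b ∈ K, a * b = 1 ∨ a * b ∈ D := by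
    intro a ha b hb
    have h : a * b ∈ K * K := Set.mul_mem_mul ha hb
    rw [hKD] at h
    rcases h with h | h
    · exact Or.inl h
    · exact Or.inr h
  -- x is real, K is closed under inverses
  have hxinv : x⁻¹ ∈ K := by
    have h1 : (1 : G) ∈ K * K := by rw [hKD]; exact Or.inl rfl
    rw [Set.mem_mul] at h1
    obtain ⟨a, ha, b, hb, hab⟩ := h1
    have hba : b = a⁻¹ := (inv_eq_of_mul_eq_one_right hab).symm
    rw [hK] at ha hb ⊢
    obtain ⟨g, rfl⟩ := ha
    rw [hba] at hb
    obtain ⟨k, hk⟩ := hb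
    -- (g⁻¹ x g)⁻¹ = k⁻¹ x k, i.e. x⁻¹ = g k⁻¹ x k g⁻¹
    refine ⟨k * g⁻¹, ?_⟩
    have : g⁻¹ * x⁻¹ * g = k⁻¹ * x * k := by rw [← hk]; group
    calc x⁻¹ = g * (g⁻¹ * x⁻¹ * g) * g⁻¹ := by group
    _ = g * (k⁻¹ * x * k) * g⁻¹ := by rw [this]
    _ = (k * g⁻¹)⁻¹ * x * (k * g⁻¹) := by group
  have hKinv : ∀ a ∈ K, a⁻¹ ∈ K := by
    intro a ha
    rw [hK] at ha ⊢
    obtain ⟨g, rfl⟩ := ha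
    have hxi : x⁻¹ ∈ conjClass x := hK ▸ hxinv
    obtain ⟨k, hk⟩ := hxi
    exact ⟨k * g, by rw [show (g⁻¹ * x * g)⁻¹ = g⁻¹ * x⁻¹ * g by group, hk]; group⟩
  -- D basics
  have hD1 : ∀ u ∈ D, u ≠ 1 := by
    intro u hu h1
    rw [hD] at hu
    obtain ⟨g, hg⟩ := hu
    apply hd
    have : g⁻¹ * d * g = 1 := by rw [← hg, h1]
    calc d = g * (g⁻¹ * d * g) * g⁻¹ := by group
    _ = 1 := by rw [this]; group
  have hxxD : x * x ∈ D := by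
    rcases hmulK x hxK x hxK with h | h
    · exact absurd h hxx1
    · exact h
  have hDeq : D = conjClass (x * x) := by
    rw [hD]
    exact (conjClass_eq_of_mem (hD ▸ hxxD : x * x ∈ conjClass d)).symm
  have hDconj : ∀ u ∈ D, ∀ g : G, g⁻¹ * u * g ∈ D := by
    intro u hu g; rw [hDeq] at hu ⊢; exact conjClass_conj_mem hu g
  have hDpair : ∀ u ∈ D, ∀ v ∈ D, ∃ h : G, v = h⁻¹ * u * h := by
    intro u hu v hv; rw [hDeq] at hu hv; exact conjClass_pair hu hv
  have hDinv : ∀ u ∈ D, u⁻¹ ∈ D := by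
    intro u hu
    have hu2 : u ∈ K * K := by rw [hKD]; exact Or.inr hu
    rw [Set.mem_mul] at hu2
    obtain ⟨a, ha, b, hb, hab⟩ := hu2
    have : u⁻¹ = b⁻¹ * a⁻¹ := by rw [← hab]; group
    rw [this]
    rcases hmulK b⁻¹ (hKinv b hb) a⁻¹ (hKinv a ha) with h | h
    · exfalso
      apply hD1 u hu
      have : b⁻¹ * a⁻¹ = (a * b)⁻¹ := by group
      rw [this, hab] at h
      rw [← inv_inv u, h, inv_one]
    · exact h
  have hDsq : ∀ u ∈ D, ∃ w ∈ K, w * w = u := by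
    intro u hu
    rw [hDeq] at hu
    obtain ⟨g, rfl⟩ := hu
    exact ⟨g⁻¹ * x * g, hKconj x hxK g, by group⟩
  -- ## Counting
  haveI : Fintype ↥K := Fintype.ofFinite _
  haveI : Fintype ↥D := Fintype.ofFinite _
  set KF := K.toFinset with hKFdef
  set DF := D.toFinset with hDFdef
  have hmemKF : ∀ a : G, a ∈ KF ↔ a ∈ K := fun a => Set.mem_toFinset
  have hmemDF : ∀ a : G, a ∈ DF ↔ a ∈ D := fun a => Set.mem_toFinset
  set n := KF.card with hncard
  have hn3 : 3 ≤ n := by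
    rwa [Set.ncard_eq_toFinset_card'] at hKcard
  set PP := (KF ×ˢ KF).filter (fun p : G × G => ¬ p.1 * p.2 = 1) with hPPdef
  set fib := fun u : G => PP.filter (fun p : G × G => p.1 * p.2 = u) with hfibdef
  have hmemfib : ∀ u : G, ∀ p : G × G,
      p ∈ fib u ↔ (p.1 ∈ K ∧ p.2 ∈ K ∧ ¬ p.1 * p.2 = 1 ∧ p.1 * p.2 = u) := by
    intro u p
    simp only [hfibdef, hPPdef, Finset.mem_filter, Finset.mem_product, hmemKF]
    tauto
  -- the fibers all have the same cardinality
  set c := (fib (x * x)).card with hcdef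
  have hconst : ∀ u ∈ D, (fib u).card = c := by
    have mono : ∀ u ∈ D, ∀ v ∈ D, (fib u).card ≤ (fib v).card := by
      intro u hu v hv
      obtain ⟨h, rfl⟩ := hDpair u hu v hv
      apply Finset.card_le_card_of_injOn (fun p => (h⁻¹ * p.1 * h, h⁻¹ * p.2 * h))
      · intro p hp
        simp only [Finset.mem_coe] at hp ⊢
        rw [hmemfib] at hp
        obtain ⟨h1, h2, h3, h4⟩ := hp
        rw [hmemfib]
        refine ⟨hKconj _ h1 h, hKconj _ h2 h, ?_, ?_⟩
        · intro hcon
          apply h3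
          have : p.1 * p.2 = h * (h⁻¹ * p.1 * h * (h⁻¹ * p.2 * h)) * h⁻¹ := by group
          rw [this, hcon]; group
        · rw [show h⁻¹ * p.1 * h * (h⁻¹ * p.2 * h) = h⁻¹ * (p.1 * p.2) * h by group, h4]
      · intro p hp q hq hpq
        have e1 : h⁻¹ * p.1 * h = h⁻¹ * q.1 * h := congrArg Prod.fst hpq
        have e2 : h⁻¹ * p.2 * h = h⁻¹ * q.2 * h := congrArg Prod.snd hpq
        have f1 : p.1 = q.1 := by
          have := mul_right_cancel e1; exact mul_left_cancel this
        have f2 : p.2 = q.2 := by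
          have := mul_right_cancel e2; exact mul_left_cancel this
        exact Prod.ext f1 f2
    intro u hu
    exact le_antisymm (mono u hu (x * x) hxxD) (mono (x * x) hxxD u hu)
  set e := DF.card with hedef
  -- e * c + n = n * n
  have hcount : e * c + n = n * n := by
    have h1 : ((KF ×ˢ KF).filter (fun p : G × G => p.1 * p.2 = 1)).card = n := by
      refine Finset.card_bij' (fun p _ => p.1) (fun a _ => (a, a⁻¹)) ?_ ?_ ?_ ?_
      · intro p hp
        simp only [Finset.mem_filter, Finset.mem_product] at hp
        exact hp.1.1
      · intro a ha
        simp only [Finset.mem_filter, Finset.mem_product, hmemKF] at ha ⊢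
        exact ⟨⟨ha, hKinv a ha⟩, by group⟩
      · intro p hp
        simp only [Finset.mem_filter, Finset.mem_product] at hp
        have h6 : p.1⁻¹ = p.2 := inv_eq_of_mul_eq_one_right hp.2
        exact Prod.ext rfl h6
      · intro a ha; rfl
    have h2 : PP.card + n = n * n := by
      have hPPsd : PP = (KF ×ˢ KF) \ ((KF ×ˢ KF).filter (fun p : G × G => p.1 * p.2 = 1)) := by
        rw [hPPdef, ← Finset.filter_not]
      have hnn : n ≤ n * n := Nat.le_mul_of_pos_left n (by omega)
      rw [hPPsd, Finset.card_sdiff_of_subset (Finset.filter_subset _ _), h1, Finset.card_product, ← hncard]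
      omega
    have h3 : PP.card = ∑ u ∈ DF, (fib u).card := by
      apply Finset.card_eq_sum_card_fiberwise (f := fun p : G × G => p.1 * p.2)
      intro p hp
      simp only [hPPdef, Finset.mem_coe, Finset.mem_filter, Finset.mem_product, hmemKF] at hp
      simp only [Finset.mem_coe]
      rw [hmemDF]
      rcases hmulK _ hp.1.1 _ hp.1.2 with h | h
      · exact absurd h hp.2
      · exact h
    have h4 : ∑ u ∈ DF, (fib u).card = e * c := by
      rw [Finset.sum_congr rfl (fun u hu => hconst u ((hmemDF u).mp hu))]
      rw [Finset.sum_const, smul_eq_mul]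
    omega
  -- bounds
  have hcn : c ≤ n := by
    rw [hcdef, hncard]
    apply Finset.card_le_card_of_injOn (fun p => p.1)
    · intro p hp
      simp only [Finset.mem_coe] at hp ⊢
      rw [hmemfib] at hp
      rw [hmemKF]
      exact hp.1
    · intro p hp q hq hpq
      rw [Finset.mem_coe, hmemfib] at hp hq
      have : p.2 = q.2 := by
        have h1 : p.1 * p.2 = q.1 * q.2 := by rw [hp.2.2.2, hq.2.2.2]
        rw [show p.1 = q.1 from hpq] at h1
        exact mul_left_cancel h1
      exact Prod.ext hpq this
  have hen : e ≤ n := by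
    rw [hedef, hncard]
    calc DF.card ≤ (KF.image (fun w => w * w)).card := by
          apply Finset.card_le_card
          intro u hu
          obtain ⟨w, hw, hww⟩ := hDsq u ((hmemDF u).mp hu)
          exact Finset.mem_image.mpr ⟨w, (hmemKF w).mpr hw, hww⟩
    _ ≤ KF.card := Finset.card_image_le
  obtain ⟨n1, hn1⟩ : ∃ m, n = m + 1 := ⟨n - 1, by omega⟩
  have hecn : e * c = n * n1 := by
    have : n * n = n * n1 + n := by rw [hn1]; ring
    omega
  have hc_ge : n1 ≤ c := by
    have h1 : n * n1 ≤ n * c := by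
      rw [← hecn]
      exact Nat.mul_le_mul_right c hen
    exact Nat.le_of_mul_le_mul_left h1 (by omega)
  have he_ge : n1 ≤ e := by
    have h1 : n * n1 ≤ n * e := by
      rw [← hecn]
      calc e * c ≤ e * n := Nat.mul_le_mul_left e hcn
      _ = n * e := Nat.mul_comm e n
    exact Nat.le_of_mul_le_mul_left h1 (by omega)
  -- ## E = {1} ∪ D is closed under multiplication
  have key : ∀ u ∈ D, ∀ v ∈ D, u * v = 1 ∨ u * v ∈ D := by
    intro u hu v hv
    set B1 := KF.filter (fun b => u * b ∈ K) with hB1def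
    set B2 := KF.filter (fun b => b⁻¹ * v ∈ K) with hB2def
    have hc1 : c ≤ B1.card := by
      rw [← hconst u⁻¹ (hDinv u hu)]
      apply Finset.card_le_card_of_injOn (fun p => p.1)
      · intro p hp
        simp only [Finset.mem_coe] at hp ⊢
        rw [hmemfib] at hp
        obtain ⟨h1, h2, h3, h4⟩ := hp
        rw [hB1def, Finset.mem_filter, hmemKF]
        refine ⟨h1, ?_⟩
        have h5 : u = (p.1 * p.2)⁻¹ := by rw [h4, inv_inv]
        rw [h5, mul_inv_rev, inv_mul_cancel_right]
        exact hKinv _ h2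
      · intro p hp q hq hpq
        rw [Finset.mem_coe, hmemfib] at hp hq
        have : p.2 = q.2 := by
          have h1 : p.1 * p.2 = q.1 * q.2 := by rw [hp.2.2.2, hq.2.2.2]
          rw [show p.1 = q.1 from hpq] at h1
          exact mul_left_cancel h1
        exact Prod.ext hpq this
    have hc2 : c ≤ B2.card := by
      rw [← hconst v hv]
      apply Finset.card_le_card_of_injOn (fun p => p.2)
      · intro p hp
        simp only [Finset.mem_coe] at hp ⊢
        rw [hmemfib] at hp
        obtain ⟨h1, h2, h3, h4⟩ := hp
        rw [hB2def, Finset.mem_filter, hmemKF]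
        refine ⟨h2, ?_⟩
        have : p.2⁻¹ * v = p.2⁻¹ * p.1 * p.2 := by rw [← h4]; group
        rw [this]
        exact hKconj _ h1 p.2
      · intro p hp q hq hpq
        rw [Finset.mem_coe, hmemfib] at hp hq
        have : p.1 = q.1 := by
          have h1 : p.1 * p.2 = q.1 * q.2 := by rw [hp.2.2.2, hq.2.2.2]
          rw [show p.2 = q.2 from hpq] at h1
          exact mul_right_cancel h1
        exact Prod.ext this hpq
    have hsub : (B1 ∪ B2).card ≤ n := by
      rw [hncard]
      apply Finset.card_le_card
      exact Finset.union_subset (Finset.filter_subset _ _) (Finset.filter_subset _ _)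
    have hinter : (B1 ∩ B2).Nonempty := by
      rw [← Finset.card_pos]
      have := Finset.card_union_add_card_inter B1 B2
      omega
    obtain ⟨b, hb⟩ := hinter
    rw [Finset.mem_inter, hB1def, hB2def, Finset.mem_filter, Finset.mem_filter] at hb
    obtain ⟨⟨_, hub⟩, ⟨_, hbv⟩⟩ := hb
    have heq : (u * b) * (b⁻¹ * v) = u * v := by group
    rcases hmulK _ hub _ hbv with h | h
    · left; rw [← heq]; exact h
    · right; rw [← heq]; exact h
  -- ## The subgroup E
  set E' : Subgroup G :=
    { carrier := {1} ∪ D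
      one_mem' := Or.inl rfl
      mul_mem' := by
        rintro a b ha hb
        simp only [Set.mem_union, Set.mem_singleton_iff] at ha hb ⊢
        rcases ha with rfl | ha
        · rw [one_mul]; exact hb
        · rcases hb with rfl | hb
          · rw [mul_one]; exact Or.inr ha
          · exact key a ha b hb
      inv_mem' := by
        rintro a ha
        simp only [Set.mem_union, Set.mem_singleton_iff] at ha ⊢
        rcases ha with rfl | ha
        · exact Or.inl inv_one
        · exact Or.inr (hDinv a ha) } with hE'def
  have hE'mem : ∀ a : G, a ∈ E' ↔ a = 1 ∨ a ∈ D := by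
    intro a
    rw [hE'def]
    simp [Subgroup.mem_mk, Set.mem_union, Set.mem_singleton_iff]
  have hclos : Subgroup.closure D ≤ E' := by
    rw [Subgroup.closure_le]
    intro u hu
    exact Set.mem_union_right _ hu
  have hclosmem : ∀ a ∈ Subgroup.closure D, a = 1 ∨ a ∈ D := by
    intro a ha
    exact (hE'mem a).mp (hclos ha)
  -- ## the prime p
  set p := orderOf (x * x) with hpdef
  have hp0 : 0 < p := orderOf_pos (x * x)
  have hpne1 : p ≠ 1 := by
    intro h
    exact hxx1 (orderOf_eq_one_iff.mp h)
  have hDord : ∀ u ∈ D, orderOf u = p := by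
    intro u hu
    rw [hDeq] at hu
    obtain ⟨g, rfl⟩ := hu
    rw [hpdef]
    exact orderOf_conj' (x * x) g
  have hprime : p.Prime := by
    set r := p.minFac with hrdef
    have hr : r.Prime := Nat.minFac_prime hpne1
    have hdvd : r ∣ p := Nat.minFac_dvd p
    have hwo : orderOf ((x * x) ^ (p / r)) = r := by
      rw [orderOf_pow, ← hpdef]
      rw [Nat.gcd_eq_right (Nat.div_dvd_of_dvd hdvd)]
      exact Nat.div_div_self hdvd (by omega)
    have hwE : (x * x) ^ (p / r) ∈ E' := by
      exact pow_mem ((hE'mem (x * x)).mpr (Or.inr hxxD)) _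
    rcases (hE'mem _).mp hwE with h1 | h1
    · exfalso
      rw [h1, orderOf_one] at hwo
      exact hr.one_lt.ne' hwo.symm
    · have := hDord _ h1
      rw [hwo] at this
      rw [← this]
      exact hr
  -- ## p is odd
  have hp2 : p ≠ 2 := by
    intro hp2
    -- all squares of elements of K coincide, contradicting |D| ≥ 2
    have hE2 : ∀ u ∈ D, u * u = 1 := by
      intro u hu
      have h := pow_orderOf_eq_one u
      rw [hDord u hu, hp2, pow_two] at h
      exact h
    have hsq1 : ∀ a ∈ K, ∀ b ∈ K, (a * b) * (a * b) = 1 := by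
      intro a ha b hb
      rcases hmulK a ha b hb with h | h
      · rw [h, one_mul]
      · exact hE2 _ h
    have I1 : ∀ a ∈ K, ∀ b ∈ K, b * a * b = a⁻¹ := by
      intro a ha b hb
      have h := hsq1 a ha b hb
      calc b * a * b = a⁻¹ * (a * b * (a * b)) := by group
      _ = a⁻¹ := by rw [h, mul_one]
    have I2 : ∀ a ∈ K, ∀ w ∈ K, (w * w) * a = a * (w * w) := by
      intro a ha w hw
      have e1 : w * a * w = a⁻¹ := I1 a ha w hw
      have e2 : w * a⁻¹ * w = a := by
        have := I1 a⁻¹ (hKinv a ha) w hw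
        rwa [inv_inv] at this
      have e3 : (w * w) * a * (w * w) = a := by
        calc (w * w) * a * (w * w) = w * (w * a * w) * w := by group
        _ = w * a⁻¹ * w := by rw [e1]
        _ = a := e2
      have e4 : (w * w) * (w * w) = 1 := hsq1 w hw w hw
      have e5 : (w * w)⁻¹ = w * w := inv_eq_of_mul_eq_one_left e4
      calc (w * w) * a = ((w * w) * a * (w * w)) * (w * w)⁻¹ := by group
      _ = a * (w * w)⁻¹ := by rw [e3]
      _ = a * (w * w) := by rw [e5]
    have I3 : ∀ a ∈ K, ∀ b ∈ K, a * b = b * a := by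
      intro a ha b hb
      rcases hmulK a ha b hb with h1 | hDm
      · have hb' : a⁻¹ = b := inv_eq_of_mul_eq_one_right h1
        rw [← hb']
        group
      · obtain ⟨w, hw, hww⟩ := hDsq _ hDm
        have h2 := I2 a ha w hw
        have X : b * a = a⁻¹ * (a * b * a) := by group
        rw [← hww] at X
        rw [show a⁻¹ * (w * w * a) = a⁻¹ * ((w * w) * a) from rfl] at X
        rw [h2] at X
        have Y : a⁻¹ * (a * (w * w)) = w * w := by group
        rw [X, Y, hww]
    have I4 : ∀ b ∈ K, b * b = (x * x)⁻¹ := by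
      intro b hb
      have h := hsq1 x hxK b hb
      have comm := I3 x hxK b hb
      have hA : (x * x) * (b * b) = x * (x * b) * b := by group
      have hB : x * (b * x) * b = (x * b) * (x * b) := by group
      have h5 : (x * x) * (b * b) = 1 := by
        rw [hA, comm, hB, h]
      exact ((inv_eq_of_mul_eq_one_right h5).symm)
    have hDone : ∀ u ∈ D, u = (x * x)⁻¹ := by
      intro u hu
      obtain ⟨w, hw, hww⟩ := hDsq u hu
      rw [← hww]
      exact I4 w hw
    have he1 : e ≤ 1 := by
      rw [hedef]
      calc DF.card ≤ ({(x * x)⁻¹} : Finset G).card := by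
            apply Finset.card_le_card
            intro u hu
            rw [Finset.mem_singleton]
            exact hDone u ((hmemDF u).mp hu)
      _ = 1 := Finset.card_singleton _
    omega
  have hodd : Odd p := hprime.odd_of_ne_two hp2
  -- ## commutativity
  haveI : Nontrivial ↥E' := by
    refine ⟨⟨⟨x * x, (hE'mem _).mpr (Or.inr hxxD)⟩, 1, ?_⟩⟩
    intro h
    exact hxx1 (congrArg Subtype.val h)
  have hpE : IsPGroup p ↥E' := by
    intro g
    refine ⟨1, ?_⟩
    rw [pow_one]
    apply Subtype.ext
    rw [SubmonoidClass.coe_pow]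
    rcases (hE'mem (g : G)).mp g.2 with h | h
    · rw [h, one_pow]; rfl
    · rw [← hDord _ h, pow_orderOf_eq_one]; rfl
  haveI : Fact p.Prime := ⟨hprime⟩
  haveI hcenter := IsPGroup.center_nontrivial hpE
  obtain ⟨z, hz1⟩ := exists_ne (1 : Subgroup.center ↥E')
  set zg : G := ((z : ↥E') : G) with hzgdef
  have hzD : zg ∈ D := by
    rcases (hE'mem zg).mp (z : ↥E').2 with h | h
    · exfalso
      apply hz1
      apply Subtype.ext
      apply Subtype.ext
      exact h
    · exact h
  have hzcomm : ∀ b : ↥E', (b : G) * zg = zg * (b : G) := by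
    intro b
    have := Subgroup.mem_center_iff.mp z.2 b
    exact congrArg Subtype.val this
  have hDcomm : ∀ u ∈ D, ∀ v : G, (v = 1 ∨ v ∈ D) → u * v = v * u := by
    intro u hu v hv
    obtain ⟨h, rfl⟩ := hDpair zg hzD u hu
    have hwE : h * v * h⁻¹ ∈ E' := by
      rcases hv with rfl | hv
      · rw [mul_one, mul_inv_cancel]
        exact one_mem E'
      · apply (hE'mem _).mpr
        right
        have := hDconj v hv h⁻¹
        rwa [inv_inv] at this
    have hcw : (h * v * h⁻¹) * zg = zg * (h * v * h⁻¹) := hzcomm ⟨h * v * h⁻¹, hwE⟩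
    have hv' : v = h⁻¹ * (h * v * h⁻¹) * h := by group
    calc (h⁻¹ * zg * h) * v = h⁻¹ * (zg * (h * v * h⁻¹)) * h := by
          rw [hv']; group
    _ = h⁻¹ * ((h * v * h⁻¹) * zg) * h := by rw [hcw]
    _ = v * (h⁻¹ * zg * h) := by rw [hv']; group
  have hcomm : ∀ a ∈ Subgroup.closure D, ∀ b ∈ Subgroup.closure D, a * b = b * a := by
    intro a ha b hb
    rcases hclosmem a ha with rfl | ha'
    · rw [one_mul, mul_one]
    · exact hDcomm a ha' b (hclosmem b hb)
  -- ## exponent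
  have hexp : ∀ g ∈ Subgroup.closure D, g ^ p = 1 := by
    intro g hg
    rcases hclosmem g hg with rfl | hg'
    · exact one_pow p
    · rw [← hDord g hg']
      exact pow_orderOf_eq_one g
  -- ## order of x
  have hxp : p = orderOf x / Nat.gcd (orderOf x) 2 := by
    rw [hpdef, ← pow_two, orderOf_pow]
  have horder : orderOf x = p ∨ orderOf x = 2 * p := by
    rcases Nat.even_or_odd (orderOf x) with he | ho
    · right
      have h2 : Nat.gcd (orderOf x) 2 = 2 := Nat.gcd_eq_right he.two_dvd
      rw [hxp, h2]
      exact (Nat.mul_div_cancel' he.two_dvd).symm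
    · left
      have h2 : Nat.gcd (orderOf x) 2 = 1 := by
        rcases (Nat.Prime.eq_one_or_self_of_dvd Nat.prime_two _
          (Nat.gcd_dvd_right (orderOf x) 2)) with h | h
        · exact h
        · exfalso
          have : (2 : ℕ) ∣ orderOf x := h ▸ Nat.gcd_dvd_left (orderOf x) 2
          rw [← Nat.not_even_iff_odd] at ho
          exact ho (even_iff_two_dvd.mpr this)
      rw [hxp, h2, Nat.div_one]
  exact ⟨p, hprime, hodd, hcomm, hexp, horder⟩
end

section
/- Let G be a finite group and suppose that every non-central conjugacy class K of G satisfies K² = {1} ∪ D for some conjugacy class D of a non-identity element; that is, for every x ∈ G with x ∉ Z(G) there exists d ∈ G, d ≠ 1, with (x^G)² = {1} ∪ d^G. Then there exists a nilpotent normal subgroup N of G such that g² ∈ N for every g ∈ G; equivalently, the quotient G/N is an elementary abelian 2-group (this says G/F(G) is an elementary abelian 2-group, where F(G) is the Fitting subgroup). -/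
open Pointwise

namespace CCSq
variable {G : Type*} [Group G]

lemma self_mem (x : G) : x ∈ conjClass x := ⟨1, by group⟩

lemma conj_mem {a x : G} (ha : a ∈ conjClass x) (g : G) : g⁻¹ * a * g ∈ conjClass x := by
  obtain ⟨k, rfl⟩ := ha
  exact ⟨k * g, by group⟩

lemma class_eq {a x : G} (ha : a ∈ conjClass x) : conjClass a = conjClass x := by
  obtain ⟨k, rfl⟩ := ha
  ext b; constructor
  · rintro ⟨g, rfl⟩; exact ⟨k * g, by group⟩
  · rintro ⟨g, rfl⟩; exact ⟨k⁻¹ * g, by group⟩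

lemma ne_one_of_mem {a d : G} (hd : d ≠ 1) (ha : a ∈ conjClass d) : a ≠ 1 := by
  obtain ⟨g, rfl⟩ := ha
  intro h1
  exact hd (by calc d = g * (g⁻¹ * d * g) * g⁻¹ := by group
                    _ = 1 := by rw [h1]; group)

lemma central_class {x : G} (hx : x ∈ Subgroup.center G) : conjClass x = {x} := by
  ext a; constructor
  · rintro ⟨g, rfl⟩
    have hc := (Subgroup.mem_center_iff.mp hx) g⁻¹
    simp only [Set.mem_singleton_iff]
    rw [hc, inv_mul_cancel_right]
  · intro ha
    rw [Set.mem_singleton_iff] at ha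
    rw [ha]; exact self_mem x

lemma orderOf_of_mem {a x : G} (ha : a ∈ conjClass x) : orderOf a = orderOf x := by
  obtain ⟨g, rfl⟩ := ha
  have : g⁻¹ * x * g = (MulAut.conj g⁻¹) x := by
    simp [MulAut.conj_apply, mul_assoc]
  rw [this, MulEquiv.orderOf_eq]

lemma inv_self_mem {x : G} (h1 : (1:G) ∈ conjClass x * conjClass x) : x⁻¹ ∈ conjClass x := by
  rw [Set.mem_mul] at h1
  obtain ⟨a, ⟨g, rfl⟩, b, ⟨k, rfl⟩, hab⟩ := h1
  have h2 : (g⁻¹ * x * g)⁻¹ = k⁻¹ * x * k := inv_eq_of_mul_eq_one_right hab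
  refine ⟨k * g⁻¹, ?_⟩
  rw [show x⁻¹ = g * (g⁻¹ * x * g)⁻¹ * g⁻¹ by group, h2]
  group

lemma inv_mem {a x : G} (hx : x⁻¹ ∈ conjClass x) (ha : a ∈ conjClass x) : a⁻¹ ∈ conjClass x := by
  obtain ⟨g, rfl⟩ := ha
  obtain ⟨k, hk⟩ := hx
  refine ⟨k * g, ?_⟩
  rw [show (g⁻¹ * x * g)⁻¹ = g⁻¹ * x⁻¹ * g by group, hk]
  group


/-- The key reduction: if the class of `d` contains a noncentral element `u`, and some product
of two elements of the class of `d` lies again in the class of `d`, then products of two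
elements of the class of `d` always lie in `{1} ∪ conjClass d`. -/
lemma Rlemma
    (h : ∀ x : G, x ∉ Subgroup.center G →
      ∃ d : G, d ≠ 1 ∧ conjClass x * conjClass x = {1} ∪ conjClass d)
    {d u e₁ e₂ : G} (hd : d ≠ 1) (hu : u ∉ Subgroup.center G)
    (huD : u ∈ conjClass d) (h1 : e₁ ∈ conjClass d) (h2 : e₂ ∈ conjClass d)
    (h12 : e₁ * e₂ ∈ conjClass d) :
    ∀ a ∈ conjClass d, ∀ b ∈ conjClass d, a * b ∈ ({1} ∪ conjClass d : Set G) := by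
  obtain ⟨d', hd', hKu⟩ := h u hu
  have hCu : conjClass u = conjClass d := class_eq huD
  have h12' : e₁ * e₂ ∈ ({1} ∪ conjClass d' : Set G) := by
    rw [← hKu]
    exact Set.mul_mem_mul (by rw [hCu]; exact h1) (by rw [hCu]; exact h2)
  have h12'' : e₁ * e₂ ∈ conjClass d' := by
    rcases h12' with h' | h'
    · exact absurd h' (by simpa using ne_one_of_mem hd h12)
    · exact h'
  have hdd' : conjClass d' = conjClass d := by
    rw [← class_eq h12'', class_eq h12]
  intro a ha b hb
  have : a * b ∈ conjClass u * conjClass u := by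
    rw [hCu]; exact Set.mul_mem_mul ha hb
  rw [hKu, hdd'] at this
  exact this


/-- Products of two elements of the distinguished class `D` stay in `{1} ∪ D`. -/
lemma Dmul
    (h : ∀ x : G, x ∉ Subgroup.center G →
      ∃ d : G, d ≠ 1 ∧ conjClass x * conjClass x = {1} ∪ conjClass d)
    {x d : G} (hx : x ∉ Subgroup.center G) (hd : d ≠ 1)
    (hK : conjClass x * conjClass x = {1} ∪ conjClass d) :
    ∀ a ∈ conjClass d, ∀ b ∈ conjClass d, a * b ∈ ({1} ∪ conjClass d : Set G) := by
  have hone : (1:G) ∈ conjClass x * conjClass x := by rw [hK]; left; rfl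
  have hinv : x⁻¹ ∈ conjClass x := inv_self_mem hone
  have memD : ∀ w ∈ conjClass x * conjClass x, w ≠ 1 → w ∈ conjClass d := by
    intro w hw hne
    rw [hK] at hw
    rcases hw with hw | hw
    · exact absurd hw hne
    · exact hw
  by_cases hx2 : x * x = 1
  -- ===================== Case x² = 1 =====================
  · have hxinv : x⁻¹ = x := inv_eq_of_mul_eq_one_right hx2
    have hconjsq : ∀ g : G, (g⁻¹ * x * g) * (g⁻¹ * x * g) = 1 := by
      intro g
      calc (g⁻¹ * x * g) * (g⁻¹ * x * g) = g⁻¹ * (x * x) * g := by group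
        _ = 1 := by rw [hx2]; group
    by_cases h3a : ∃ g : G, x * (g⁻¹ * x * g) ≠ 1 ∧
        (x * (g⁻¹ * x * g)) * (x * (g⁻¹ * x * g)) ≠ 1
    · -- 3a : some product of two conjugate involutions has order > 2
      obtain ⟨g, hc1, hc2⟩ := h3a
      have hwK : g⁻¹ * x * g ∈ conjClass x := conj_mem (self_mem x) g
      have hwinv : (g⁻¹ * x * g)⁻¹ = g⁻¹ * x * g := inv_eq_of_mul_eq_one_right (hconjsq g)
      have cD : x * (g⁻¹ * x * g) ∈ conjClass d :=
        memD _ (Set.mul_mem_mul (self_mem x) hwK) hc1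
      have csq : (x * (g⁻¹ * x * g)) * (x * (g⁻¹ * x * g))
          = x * ((g⁻¹ * x * g)⁻¹ * x * (g⁻¹ * x * g)) := by rw [hwinv]; group
      have csqD : (x * (g⁻¹ * x * g)) * (x * (g⁻¹ * x * g)) ∈ conjClass d := by
        refine memD _ ?_ hc2
        rw [csq]
        exact Set.mul_mem_mul (self_mem x) (conj_mem (self_mem x) _)
      have cNC : x * (g⁻¹ * x * g) ∉ Subgroup.center G := by
        intro hc
        have hCd := class_eq cD
        rw [central_class hc] at hCd
        have h' := csqD
        rw [← hCd, Set.mem_singleton_iff] at h'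
        have : x * (g⁻¹ * x * g) = 1 := by
          have := mul_left_cancel (a := x * (g⁻¹ * x * g))
            (by rw [h', mul_one] :
              (x * (g⁻¹ * x * g)) * (x * (g⁻¹ * x * g)) = (x * (g⁻¹ * x * g)) * 1)
          exact this
        exact hc1 this
      exact Rlemma h hd cNC cD cD cD csqD
    · push_neg at h3a
      have hsq : ∀ g : G, (x * (g⁻¹ * x * g)) * (x * (g⁻¹ * x * g)) = 1 := by
        intro g
        by_cases h1 : x * (g⁻¹ * x * g) = 1
        · rw [h1, mul_one]
        · exact h3a g h1
      by_cases h3bi : ∃ g k : G, x * (g⁻¹ * x * g) ≠ 1 ∧ x * (k⁻¹ * x * k) ≠ 1 ∧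
          x * (g⁻¹ * x * g) ≠ x * (k⁻¹ * x * k)
      · obtain ⟨g, k, h1, h2, h12⟩ := h3bi
        have hw₁K : g⁻¹ * x * g ∈ conjClass x := conj_mem (self_mem x) g
        have hw₂K : k⁻¹ * x * k ∈ conjClass x := conj_mem (self_mem x) k
        have c₁D : x * (g⁻¹ * x * g) ∈ conjClass d :=
          memD _ (Set.mul_mem_mul (self_mem x) hw₁K) h1
        have c₂D : x * (k⁻¹ * x * k) ∈ conjClass d :=
          memD _ (Set.mul_mem_mul (self_mem x) hw₂K) h2
        have key : (x * (g⁻¹ * x * g)) * (x * (k⁻¹ * x * k))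
            = (x⁻¹ * (g⁻¹ * x * g) * x) * (k⁻¹ * x * k) := by rw [hxinv]; group
        have pK : (x * (g⁻¹ * x * g)) * (x * (k⁻¹ * x * k)) ∈
            conjClass x * conjClass x := by
          rw [key]
          exact Set.mul_mem_mul (conj_mem hw₁K x) hw₂K
        have pne : (x * (g⁻¹ * x * g)) * (x * (k⁻¹ * x * k)) ≠ 1 := by
          intro he
          have hinv1 : (x * (g⁻¹ * x * g))⁻¹ = x * (k⁻¹ * x * k) :=
            inv_eq_of_mul_eq_one_right he
          have hinv2 : (x * (g⁻¹ * x * g))⁻¹ = x * (g⁻¹ * x * g) :=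
            inv_eq_of_mul_eq_one_right (hsq g)
          exact h12 (hinv2 ▸ hinv1)
        have pD := memD _ pK pne
        have c₁NC : x * (g⁻¹ * x * g) ∉ Subgroup.center G := by
          intro hc
          have hCd := class_eq c₁D
          rw [central_class hc] at hCd
          have h' := c₂D
          rw [← hCd, Set.mem_singleton_iff] at h'
          exact h12 h'.symm
        exact Rlemma h hd c₁NC c₁D c₁D c₂D pD
      · push_neg at h3bi
        have hex : ∃ g₀ : G, x * (g₀⁻¹ * x * g₀) ≠ 1 := by
          by_contra hall
          push_neg at hall
          apply hx
          rw [Subgroup.mem_center_iff]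
          intro g
          have h1 := hall g
          have h2 : g⁻¹ * x * g = x := by
            have : g⁻¹ * x * g = x⁻¹ := by
              have := inv_eq_of_mul_eq_one_right (hall g)
              rw [← this, hxinv]
            rw [this, hxinv]
          calc g * x = g * (g⁻¹ * x * g) := by rw [h2]
            _ = x * g := by group
        obtain ⟨g₀, hc0⟩ := hex
        have hcc : (x * (g₀⁻¹ * x * g₀)) * (x * (g₀⁻¹ * x * g₀)) = 1 := hsq g₀
        have hcinv : (x * (g₀⁻¹ * x * g₀))⁻¹ = x * (g₀⁻¹ * x * g₀) :=
          inv_eq_of_mul_eq_one_right hcc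
        have huniq : ∀ g : G, x * (g⁻¹ * x * g) = 1 ∨
            x * (g⁻¹ * x * g) = x * (g₀⁻¹ * x * g₀) := by
          intro g
          by_cases h1 : x * (g⁻¹ * x * g) = 1
          · exact Or.inl h1
          · exact Or.inr (h3bi g g₀ h1 hc0)
        have hKsub : ∀ a ∈ conjClass x, a = x ∨ a = x * (x * (g₀⁻¹ * x * g₀)) := by
          rintro a ⟨g, rfl⟩
          rcases huniq g with h1 | h1
          · left
            have h2 : g⁻¹ * x * g = x⁻¹ := by
              have := inv_eq_of_mul_eq_one_right h1
              rw [← this]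
            rw [h2, hxinv]
          · right
            have hxx : x * (x * (g⁻¹ * x * g)) = g⁻¹ * x * g := by
              rw [← mul_assoc, hx2, one_mul]
            rw [← hxx, h1]
        have hw0inv : (g₀⁻¹ * x * g₀)⁻¹ = g₀⁻¹ * x * g₀ :=
          inv_eq_of_mul_eq_one_right (hconjsq g₀)
        have hxcx : x * (x * (g₀⁻¹ * x * g₀)) * x = x * (g₀⁻¹ * x * g₀) := by
          have e1 : x * (x * (g₀⁻¹ * x * g₀)) * x = (x * x) * ((g₀⁻¹ * x * g₀) * x) := by
            group
          have e2 : (x * (g₀⁻¹ * x * g₀))⁻¹ = (g₀⁻¹ * x * g₀) * x := by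
            rw [mul_inv_rev, hw0inv, hxinv]
          rw [e1, hx2, one_mul, ← e2, hcinv]
        have hKK : ∀ w ∈ conjClass x * conjClass x,
            w = 1 ∨ w = x * (g₀⁻¹ * x * g₀) := by
          intro w hw
          rw [Set.mem_mul] at hw
          obtain ⟨a, ha, b, hb, rfl⟩ := hw
          rcases hKsub a ha with h1 | h1 <;> rcases hKsub b hb with h2 | h2 <;>
            rw [h1, h2]
          · exact Or.inl hx2
          · right
            rw [show x * (x * (x * (g₀⁻¹ * x * g₀))) = (x * x) * (x * (g₀⁻¹ * x * g₀)) by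
              group, hx2, one_mul]
          · exact Or.inr hxcx
          · left
            rw [show (x * (x * (g₀⁻¹ * x * g₀))) * (x * (x * (g₀⁻¹ * x * g₀)))
              = (x * (x * (g₀⁻¹ * x * g₀)) * x) * (x * (g₀⁻¹ * x * g₀)) by group, hxcx, hcc]
        intro a ha b hb
        have ha' : a = x * (g₀⁻¹ * x * g₀) := by
          rcases hKK a (by rw [hK]; right; exact ha) with h' | h'
          · exact absurd h' (ne_one_of_mem hd ha)
          · exact h'
        have hb' : b = x * (g₀⁻¹ * x * g₀) := by
          rcases hKK b (by rw [hK]; right; exact hb) with h' | h'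
          · exact absurd h' (ne_one_of_mem hd hb)
          · exact h'
        left
        rw [ha', hb', hcc]
        rfl
  -- ===================== Case x² ≠ 1 =====================
  · have uD : x * x ∈ conjClass d :=
      memD _ (Set.mul_mem_mul (self_mem x) (self_mem x)) hx2
    by_cases hx4 : (x * x) * (x * x) = 1
    · -- x⁴ = 1, x² ≠ 1
      by_cases h2a : ∃ g : G, x⁻¹ * (g⁻¹ * x * g) ≠ 1 ∧ x⁻¹ * (g⁻¹ * x * g) ≠ x * x
      · obtain ⟨g, hc1, hcu⟩ := h2a
        have cD : x⁻¹ * (g⁻¹ * x * g) ∈ conjClass d :=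
          memD _ (Set.mul_mem_mul hinv (conj_mem (self_mem x) g)) hc1
        have prodeq : (x * x) * (x⁻¹ * (g⁻¹ * x * g)) = x * (g⁻¹ * x * g) := by group
        have prodK : (x * x) * (x⁻¹ * (g⁻¹ * x * g)) ∈ conjClass x * conjClass x := by
          rw [prodeq]
          exact Set.mul_mem_mul (self_mem x) (conj_mem (self_mem x) g)
        have prodne : (x * x) * (x⁻¹ * (g⁻¹ * x * g)) ≠ 1 := by
          intro he
          apply hcu
          have h1 : (x * x)⁻¹ = x⁻¹ * (g⁻¹ * x * g) := inv_eq_of_mul_eq_one_right he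
          have h2 : (x * x)⁻¹ = x * x := inv_eq_of_mul_eq_one_right hx4
          rw [← h1, h2]
        have prodD := memD _ prodK prodne
        have uNC : x * x ∉ Subgroup.center G := by
          intro hc
          have hCd := class_eq uD
          rw [central_class hc] at hCd
          have h' := cD
          rw [← hCd, Set.mem_singleton_iff] at h'
          exact hcu h'
        exact Rlemma h hd uNC uD uD cD prodD
      · push_neg at h2a
        have hKsub : ∀ a ∈ conjClass x, a = x ∨ a = x * (x * x) := by
          rintro a ⟨g, rfl⟩
          by_cases h1 : x⁻¹ * (g⁻¹ * x * g) = 1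
          · left
            have : g⁻¹ * x * g = x := by
              have h2 := inv_eq_of_mul_eq_one_right h1
              rw [← h2, inv_inv]
            exact this
          · right
            have h2 := h2a g h1
            rw [show g⁻¹ * x * g = x * (x⁻¹ * (g⁻¹ * x * g)) by group, h2]
        have hKK : ∀ w ∈ conjClass x * conjClass x, w = 1 ∨ w = x * x := by
          intro w hw
          rw [Set.mem_mul] at hw
          obtain ⟨a, ha, b, hb, rfl⟩ := hw
          rcases hKsub a ha with h1 | h1 <;> rcases hKsub b hb with h2 | h2 <;>
            rw [h1, h2]
          · exact Or.inr rfl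
          · left
            rw [show x * (x * (x * x)) = (x * x) * (x * x) by group, hx4]
          · left
            rw [show (x * (x * x)) * x = (x * x) * (x * x) by group, hx4]
          · right
            rw [show (x * (x * x)) * (x * (x * x)) = ((x * x) * (x * x)) * (x * x) by group,
              hx4, one_mul]
        intro a ha b hb
        have ha' : a = x * x := by
          rcases hKK a (by rw [hK]; right; exact ha) with h' | h'
          · exact absurd h' (ne_one_of_mem hd ha)
          · exact h'
        have hb' : b = x * x := by
          rcases hKK b (by rw [hK]; right; exact hb) with h' | h'
          · exact absurd h' (ne_one_of_mem hd hb)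
          · exact h'
        left
        rw [ha', hb', hx4]
        rfl
    · -- main case : x² ≠ 1 and x⁴ ≠ 1
      obtain ⟨g, hg⟩ := hinv
      have hg' : g⁻¹ * x⁻¹ * g = x := by
        have h1 : (x⁻¹)⁻¹ = (g⁻¹ * x * g)⁻¹ := congrArg (·⁻¹) hg
        rw [inv_inv] at h1
        rw [show g⁻¹ * x⁻¹ * g = (g⁻¹ * x * g)⁻¹ by group, ← h1]
      have hgnc : g ∉ Subgroup.center G := by
        intro hgc
        have hcomm := (Subgroup.mem_center_iff.mp hgc) x
        have h2 : g⁻¹ * x * g = x := by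
          rw [mul_assoc, hcomm, ← mul_assoc, inv_mul_cancel, one_mul]
        have h3 : x⁻¹ = x := hg.trans h2
        apply hx2
        nth_rewrite 2 [← h3]
        exact mul_inv_cancel x
      obtain ⟨d', hd', hKg⟩ := h g hgnc
      have honeg : (1:G) ∈ conjClass g * conjClass g := by rw [hKg]; left; rfl
      have hginv : g⁻¹ ∈ conjClass g := inv_self_mem honeg
      have memDg : ∀ w ∈ conjClass g * conjClass g, w ≠ 1 → w ∈ conjClass d' := by
        intro w hw hne
        rw [hKg] at hw
        rcases hw with hw | hw
        · exact absurd hw hne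
        · exact hw
      have p1 : g⁻¹ * (x⁻¹ * g * x) ∈ conjClass g * conjClass g :=
        Set.mul_mem_mul hginv (conj_mem (self_mem g) x)
      have key1 : g⁻¹ * (x⁻¹ * g * x) = x * x := by
        calc g⁻¹ * (x⁻¹ * g * x) = (g⁻¹ * x⁻¹ * g) * x := by group
          _ = x * x := by rw [hg']
      rw [key1] at p1
      have uD' : x * x ∈ conjClass d' := memDg _ p1 hx2
      have p2 : g⁻¹ * ((x * x)⁻¹ * g * (x * x)) ∈ conjClass g * conjClass g :=
        Set.mul_mem_mul hginv (conj_mem (self_mem g) (x * x))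
      have key2 : g⁻¹ * ((x * x)⁻¹ * g * (x * x)) = (x * x) * (x * x) := by
        calc g⁻¹ * ((x * x)⁻¹ * g * (x * x))
            = (g⁻¹ * x⁻¹ * g) * ((g⁻¹ * x⁻¹ * g) * (x * x)) * x * x⁻¹ := by group
          _ = (x * x) * (x * x) := by rw [hg']; group
      rw [key2] at p2
      have u2D' : (x * x) * (x * x) ∈ conjClass d' := memDg _ p2 hx4
      have hCdd' : conjClass d' = conjClass d := by
        rw [← class_eq uD', class_eq uD]
      have u2D : (x * x) * (x * x) ∈ conjClass d := by rw [← hCdd']; exact u2D'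
      have uNC : x * x ∉ Subgroup.center G := by
        intro hc
        have hCd := class_eq uD
        rw [central_class hc] at hCd
        have h' := u2D
        rw [← hCd, Set.mem_singleton_iff] at h'
        apply hx2
        have := mul_left_cancel (a := x * x)
          (by rw [h', mul_one] : (x * x) * (x * x) = (x * x) * 1)
        exact this
      exact Rlemma h hd uNC uD uD uD u2D



/-- conjugation-invariance of `{1} ∪ conjClass d`. -/
lemma Tconj {d : G} : ∀ a ∈ ({1} ∪ conjClass d : Set G), ∀ g : G,
    g⁻¹ * a * g ∈ ({1} ∪ conjClass d : Set G) := by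
  rintro a (ha | ha) g
  · left; simp [show a = 1 from ha]
  · exact Or.inr (conj_mem ha g)

/-- inverse-invariance of `{1} ∪ conjClass d`. -/
lemma Tinv {x d : G} (hd : d ≠ 1)
    (hK : conjClass x * conjClass x = {1} ∪ conjClass d) :
    ∀ a ∈ ({1} ∪ conjClass d : Set G), a⁻¹ ∈ ({1} ∪ conjClass d : Set G) := by
  have hone : (1:G) ∈ conjClass x * conjClass x := by rw [hK]; left; rfl
  have hinv : x⁻¹ ∈ conjClass x := inv_self_mem hone
  rintro a (ha | ha)
  · left; rw [ha]; exact inv_one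
  · have haK : a ∈ conjClass x * conjClass x := by rw [hK]; right; exact ha
    rw [Set.mem_mul] at haK
    obtain ⟨u, hu, v, hv, rfl⟩ := haK
    have : (u * v)⁻¹ = v⁻¹ * u⁻¹ := by group
    rw [this, ← hK]
    exact Set.mul_mem_mul (inv_mem hinv hv) (inv_mem hinv hu)

/-- full closure of `{1} ∪ conjClass d` under multiplication. -/
lemma Tmul
    (h : ∀ x : G, x ∉ Subgroup.center G →
      ∃ d : G, d ≠ 1 ∧ conjClass x * conjClass x = {1} ∪ conjClass d)
    {x d : G} (hx : x ∉ Subgroup.center G) (hd : d ≠ 1)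
    (hK : conjClass x * conjClass x = {1} ∪ conjClass d) :
    ∀ a ∈ ({1} ∪ conjClass d : Set G), ∀ b ∈ ({1} ∪ conjClass d : Set G),
      a * b ∈ ({1} ∪ conjClass d : Set G) := by
  rintro a (ha | ha) b (hb | hb)
  · left; rw [show a = 1 from ha, show b = 1 from hb, mul_one]; rfl
  · rw [show a = 1 from ha, one_mul]; exact Or.inr hb
  · rw [show b = 1 from hb, mul_one]; exact Or.inr ha
  · exact Dmul h hx hd hK a ha b hb

variable [Fintype G]

/-- `{1} ∪ conjClass d` is an abelian (normal) subgroup: commutativity statement. -/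
lemma T_comm
    (h : ∀ x : G, x ∉ Subgroup.center G →
      ∃ d : G, d ≠ 1 ∧ conjClass x * conjClass x = {1} ∪ conjClass d)
    {x d : G} (hx : x ∉ Subgroup.center G) (hd : d ≠ 1)
    (hK : conjClass x * conjClass x = {1} ∪ conjClass d) :
    ∀ a ∈ ({1} ∪ conjClass d : Set G), ∀ b ∈ ({1} ∪ conjClass d : Set G),
      a * b = b * a := by
  set T : Subgroup G :=
    { carrier := {1} ∪ conjClass d
      one_mem' := Or.inl rfl
      mul_mem' := fun {a b} ha hb => Tmul h hx hd hK a ha b hb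
      inv_mem' := fun {a} ha => Tinv hd hK a ha } with hT
  have memT : ∀ w : G, w ∈ T ↔ w ∈ ({1} ∪ conjClass d : Set G) := fun w => Iff.rfl
  have hdT : d ∈ T := Or.inr (self_mem d)
  -- the order of d is prime
  have hn1 : orderOf d ≠ 1 := by simpa [orderOf_eq_one_iff] using hd
  have hn0 : 0 < orderOf d := orderOf_pos d
  have hp := Nat.minFac_prime hn1
  have hdvd := Nat.minFac_dvd (orderOf d)
  have horder : orderOf d = (orderOf d).minFac := by
    have hlt : orderOf d / (orderOf d).minFac < orderOf d := Nat.div_lt_self hn0 hp.one_lt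
    have hpos : 0 < orderOf d / (orderOf d).minFac := Nat.div_pos (Nat.minFac_le hn0) hp.pos
    have hne : d ^ (orderOf d / (orderOf d).minFac) ≠ 1 := by
      intro he
      have h1 : orderOf d ∣ orderOf d / (orderOf d).minFac := orderOf_dvd_of_pow_eq_one he
      have h2 := Nat.le_of_dvd hpos h1
      omega
    have hmemT : d ^ (orderOf d / (orderOf d).minFac) ∈ T := pow_mem hdT _
    have hmemD : d ^ (orderOf d / (orderOf d).minFac) ∈ conjClass d := by
      rcases (memT _).mp hmemT with h' | h'
      · exact absurd h' hne
      · exact h'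
    have hord : orderOf (d ^ (orderOf d / (orderOf d).minFac)) = orderOf d := orderOf_of_mem hmemD
    have hpow : (d ^ (orderOf d / (orderOf d).minFac)) ^ (orderOf d).minFac = 1 := by
      rw [← pow_mul, Nat.div_mul_cancel hdvd, pow_orderOf_eq_one]
    have hdvd2 : orderOf d ∣ (orderOf d).minFac := by
      have h2 := orderOf_dvd_of_pow_eq_one hpow
      rwa [hord] at h2
    exact ((Nat.Prime.eq_one_or_self_of_dvd hp (orderOf d) hdvd2).resolve_left hn1)
  have hexp : ∀ t ∈ conjClass d, t ^ (orderOf d).minFac = 1 := by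
    intro t ht
    rw [← horder, ← orderOf_of_mem ht, pow_orderOf_eq_one]
  haveI : Fact ((orderOf d).minFac).Prime := ⟨hp⟩
  have hPG : IsPGroup ((orderOf d).minFac) ↥T := by
    rintro ⟨t, ht⟩
    refine ⟨1, ?_⟩
    apply Subtype.ext
    rw [pow_one]
    push_cast [SubmonoidClass.coe_pow]
    rcases (memT _).mp ht with h' | h'
    · rw [show t = 1 from h', one_pow]
    · exact hexp t h'
  haveI : Nontrivial ↥T := ⟨⟨⟨d, hdT⟩, 1, by simp [Subtype.ext_iff, hd]⟩⟩
  haveI := hPG.center_nontrivial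
  obtain ⟨z, hzne⟩ := exists_ne (1 : Subgroup.center ↥T)
  have hzvT : ((z : ↥T) : G) ∈ T := (z : ↥T).property
  have hzv1 : ((z : ↥T) : G) ≠ 1 := by
    intro he
    apply hzne
    apply Subtype.ext
    apply Subtype.ext
    exact he
  have hzvD : ((z : ↥T) : G) ∈ conjClass d := by
    rcases (memT _).mp hzvT with h' | h'
    · exact absurd h' hzv1
    · exact h'
  have hzcomm : ∀ t ∈ ({1} ∪ conjClass d : Set G), t * ((z : ↥T) : G) = ((z : ↥T) : G) * t := by
    intro t ht
    have h1 := Subgroup.mem_center_iff.mp z.property ⟨t, (memT t).mpr ht⟩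
    exact congrArg Subtype.val h1
  set zv : G := ((z : ↥T) : G) with hzv
  intro a ha b hb
  rcases ha with ha | haD
  · rw [show a = 1 from ha, one_mul, mul_one]
  rcases hb with hb | hbD
  · rw [show b = 1 from hb, one_mul, mul_one]
  have hbz : b ∈ conjClass zv := by rw [class_eq hzvD]; exact hbD
  obtain ⟨g, rfl⟩ := hbz
  have haT' : g * a * g⁻¹ ∈ ({1} ∪ conjClass d : Set G) := by
    have := Tconj a (Or.inr haD) g⁻¹
    rwa [inv_inv] at this
  have hcz := hzcomm _ haT'
  calc a * (g⁻¹ * zv * g) = g⁻¹ * ((g * a * g⁻¹) * zv) * g := by group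
    _ = g⁻¹ * (zv * (g * a * g⁻¹)) * g := by rw [hcz]
    _ = (g⁻¹ * zv * g) * a := by group

/-- commutation across two (possibly different) unions `{1} ∪ D`. -/
lemma cross_comm
    (h : ∀ x : G, x ∉ Subgroup.center G →
      ∃ d : G, d ≠ 1 ∧ conjClass x * conjClass x = {1} ∪ conjClass d)
    {x y dx dy : G} (hx : x ∉ Subgroup.center G) (hy : y ∉ Subgroup.center G)
    (hdx : dx ≠ 1) (hdy : dy ≠ 1)
    (hKx : conjClass x * conjClass x = {1} ∪ conjClass dx)
    (hKy : conjClass y * conjClass y = {1} ∪ conjClass dy) :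
    ∀ a ∈ ({1} ∪ conjClass dx : Set G), ∀ b ∈ ({1} ∪ conjClass dy : Set G),
      a * b = b * a := by
  by_cases hcc : conjClass dx = conjClass dy
  · intro a ha b hb
    exact T_comm h hx hdx hKx a ha b (by rw [hcc]; exact hb)
  · intro a ha b hb
    rcases ha with ha | haD
    · rw [show a = 1 from ha, one_mul, mul_one]
    rcases hb with hb | hbD
    · rw [show b = 1 from hb, one_mul, mul_one]
    have hq1 : a⁻¹ * (b⁻¹ * a * b) ∈ ({1} ∪ conjClass dx : Set G) :=
      Tmul h hx hdx hKx _ (Tinv hdx hKx a (Or.inr haD)) _ (Or.inr (conj_mem haD b))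
    have hq2 : a⁻¹ * (b⁻¹ * a * b) ∈ ({1} ∪ conjClass dy : Set G) := by
      rw [show a⁻¹ * (b⁻¹ * a * b) = (a⁻¹ * b⁻¹ * a) * b by group]
      refine Tmul h hy hdy hKy _ ?_ _ (Or.inr hbD)
      have := Tconj b⁻¹ (Tinv hdy hKy b (Or.inr hbD)) a
      exact this
    have hqe : a⁻¹ * (b⁻¹ * a * b) = 1 := by
      rcases hq1 with h1 | h1
      · exact h1
      rcases hq2 with h2 | h2
      · exact h2
      · exact absurd (by rw [← class_eq h1, class_eq h2]) hcc
    have hfix : b⁻¹ * a * b = a :=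
      mul_left_cancel (a := a⁻¹) (by rw [hqe, inv_mul_cancel])
    calc a * b = b * (b⁻¹ * a * b) := by group
      _ = b * a := by rw [hfix]

end CCSq

open CCSq

/-- **Corollary C.** If every non-central conjugacy class `K` of a finite group `G`
satisfies `K² = {1} ∪ D` for some conjugacy class `D` of a non-identity element, then
there is a nilpotent normal subgroup `N` of `G` (namely the Fitting subgroup) such that
`g² ∈ N` for every `g ∈ G`, i.e. `G/N` is an elementary abelian 2-group. -/
theorem all_noncentral_classes_square
    {G : Type*} [Group G] [Fintype G]
    (h : ∀ x : G, x ∉ Subgroup.center G →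
      ∃ d : G, d ≠ 1 ∧ conjClass x * conjClass x = {1} ∪ conjClass d) :
    ∃ N : Subgroup G, N.Normal ∧ Group.IsNilpotent N ∧ ∀ g : G, g ^ 2 ∈ N := by
  classical
  by_cases habel : ∀ g : G, g ∈ Subgroup.center G
  · refine ⟨Subgroup.center G, ?_, ?_, fun g => habel _⟩
    · constructor
      intro n hn g
      have h1 := (Subgroup.mem_center_iff.mp hn) g
      have h2 : g * n * g⁻¹ = n := by rw [h1, mul_inv_cancel_right]
      rw [h2]; exact hn
    · letI : CommGroup ↥(Subgroup.center G) :=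
        { (inferInstance : Group ↥(Subgroup.center G)) with
          mul_comm := fun a b => Subtype.ext ((Subgroup.mem_center_iff.mp b.2) a.1) }
      infer_instance
  · push_neg at habel
    obtain ⟨x₀, hx₀⟩ := habel
    choose dfun hdfun hKfun using h
    set S : Set G := {w | ∃ x : G, ∃ hx : x ∉ Subgroup.center G,
        w ∈ ({1} ∪ conjClass (dfun x hx) : Set G)} with hS
    have hScomm : ∀ a ∈ S, ∀ b ∈ S, a * b = b * a := by
      rintro a ⟨xa, hxa, haT⟩ b ⟨xb, hxb, hbT⟩
      exact cross_comm (fun x hx => ⟨dfun x hx, hdfun x hx, hKfun x hx⟩)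
        hxa hxb (hdfun xa hxa) (hdfun xb hxb) (hKfun xa hxa) (hKfun xb hxb) a haT b hbT
    have step1 : ∀ b ∈ S, ∀ a ∈ Subgroup.closure S, Commute b a := by
      intro b hb a ha
      refine Subgroup.closure_induction (p := fun g _ => Commute b g)
        (fun y hy => hScomm b hb y hy) (Commute.one_right b)
        (fun u v _ _ hcu hcv => hcu.mul_right hcv)
        (fun u _ hcu => hcu.inv_right) ha
    have step2 : ∀ a ∈ Subgroup.closure S, ∀ c ∈ Subgroup.closure S, Commute a c := by
      intro a ha c hc
      refine Subgroup.closure_induction (p := fun g _ => Commute g c)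
        (fun y hy => step1 y hy c hc) (Commute.one_left c)
        (fun u v _ _ hcu hcv => hcu.mul_left hcv)
        (fun u _ hcu => hcu.inv_left) ha
    have hnormal : (Subgroup.closure S).Normal := by
      constructor
      intro n hn g
      refine Subgroup.closure_induction
        (p := fun w _ => ∀ g : G, g * w * g⁻¹ ∈ Subgroup.closure S)
        ?_ ?_ ?_ ?_ hn g
      · rintro w ⟨x, hx, hwT⟩ g
        have h1 := Tconj w hwT g⁻¹
        rw [inv_inv] at h1
        exact Subgroup.subset_closure ⟨x, hx, h1⟩
      · intro g
        simp only [mul_one, mul_inv_cancel]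
        exact one_mem _
      · intro u v _ _ pu pv g
        rw [show g * (u * v) * g⁻¹ = (g * u * g⁻¹) * (g * v * g⁻¹) by group]
        exact mul_mem (pu g) (pv g)
      · intro u _ pu g
        rw [show g * u⁻¹ * g⁻¹ = (g * u * g⁻¹)⁻¹ by group]
        exact inv_mem (pu g)
    refine ⟨Subgroup.closure S, hnormal, ?_, ?_⟩
    · letI : CommGroup ↥(Subgroup.closure S) :=
        { (inferInstance : Group ↥(Subgroup.closure S)) with
          mul_comm := fun a b => Subtype.ext (step2 a.1 a.2 b.1 b.2) }
      infer_instance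
    · intro g
      by_cases hg : g ∈ Subgroup.center G
      · have hgx : g * x₀ ∉ Subgroup.center G := by
          intro hc
          apply hx₀
          have h1 := Subgroup.mul_mem _ (Subgroup.inv_mem _ hg) hc
          simpa using h1
        have hA : (g * x₀) * (g * x₀) ∈ S := by
          refine ⟨g * x₀, hgx, ?_⟩
          rw [← hKfun (g * x₀) hgx]
          exact Set.mul_mem_mul (self_mem _) (self_mem _)
        have hB : x₀ * x₀ ∈ S :=
          ⟨x₀, hx₀, by rw [← hKfun x₀ hx₀]; exact Set.mul_mem_mul (self_mem _) (self_mem _)⟩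
        have hcomm := (Subgroup.mem_center_iff.mp hg) x₀
        have hgsq : g ^ 2 = ((g * x₀) * (g * x₀)) * (x₀ * x₀)⁻¹ := by
          rw [pow_two]
          have hcalc : ((g * x₀) * (g * x₀)) * (x₀ * x₀)⁻¹ = g * g := by
            calc ((g * x₀) * (g * x₀)) * (x₀ * x₀)⁻¹ = g * (x₀ * g) * x₀⁻¹ := by group
              _ = g * (g * x₀) * x₀⁻¹ := by rw [hcomm]
              _ = g * g := by group
          rw [hcalc]
        rw [hgsq]
        exact mul_mem (Subgroup.subset_closure hA) (inv_mem (Subgroup.subset_closure hB))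
      · have hgg : g * g ∈ S :=
          ⟨g, hg, by rw [← hKfun g hg]; exact Set.mul_mem_mul (self_mem g) (self_mem g)⟩
        rw [pow_two]
        exact Subgroup.subset_closure hgg
end

section
/- Let G be a finite group and let π be a set of primes. Suppose that for every π-element x of G (i.e. every element whose order is divisible only by primes in π) the set (x^G)² is a single conjugacy class of G. Then there exists a normal subgroup N of G whose order is divisible by no prime in π (a π'-group) such that the quotient G/N is nilpotent. (This says G/O_{π'}(G) is nilpotent, where O_{π'}(G) is the largest normal π'-subgroup of G.) -/
open Pointwise

namespace CorE
universe u


def IsPi (π : Set ℕ) (n : ℕ) : Prop := ∀ p : ℕ, p.Prime → p ∣ n → p ∈ π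

lemma pi_coprime {π : Set ℕ} {a b : ℕ} (ha : IsPi π a)
    (hb : ∀ p : ℕ, p.Prime → p ∣ b → p ∉ π) : Nat.Coprime a b := by
  by_contra hcop
  obtain ⟨p, hp, hpa, hpb⟩ := Nat.Prime.not_coprime_iff_dvd.mp hcop
  exact hb p hp hpb (ha p hp hpa)

variable {G : Type*} [Group G]

lemma mem_conjClass_self (x : G) : x ∈ conjClass x := ⟨1, by group⟩

lemma conj_mem {x a : G} (h : a ∈ conjClass x) (g : G) : g⁻¹ * a * g ∈ conjClass x := by
  obtain ⟨k, rfl⟩ := h; exact ⟨k * g, by group⟩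

lemma conjClass_eq_of_mem {x a : G} (h : a ∈ conjClass x) : conjClass a = conjClass x := by
  obtain ⟨k, rfl⟩ := h
  ext b; constructor
  · rintro ⟨g, rfl⟩; exact ⟨k * g, by group⟩
  · rintro ⟨g, rfl⟩; exact ⟨k⁻¹ * g, by group⟩

lemma conjClass_image {Q : Type*} [Group Q] (f : G →* Q) (hf : Function.Surjective f) (x : G) :
    conjClass (f x) = f '' conjClass x := by
  ext a; constructor
  · rintro ⟨q, rfl⟩
    obtain ⟨g, rfl⟩ := hf q
    exact ⟨g⁻¹ * x * g, ⟨g, rfl⟩, by simp⟩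
  · rintro ⟨b, ⟨g, rfl⟩, rfl⟩
    exact ⟨f g, by simp⟩

/-- **Key Lemma**: if `(x^G)²` is a single conjugacy class, then `x^G · x⁻¹` is a
normal subgroup `N` with `x^G = x · N`. -/
lemma key [Finite G] (x c : G)
    (hc : conjClass x * conjClass x = conjClass c) :
    ∃ N : Subgroup G, N.Normal ∧ (N : Set G) = conjClass x * {x⁻¹} ∧
      conjClass x = {x} * (N : Set G) := by
  set K := conjClass x with hK
  have hmemx := mem_conjClass_self x
  have hmem : x * x ∈ conjClass c := by
    rw [← hc]; exact Set.mul_mem_mul hmemx hmemx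
  have hcc : K * K = conjClass (x * x) := by
    rw [hc]; exact (conjClass_eq_of_mem hmem).symm
  have himg : conjClass (x * x) = (fun a => a * a) '' K := by
    ext a; constructor
    · rintro ⟨g, rfl⟩; exact ⟨g⁻¹ * x * g, ⟨g, rfl⟩, by group⟩
    · rintro ⟨b, ⟨g, rfl⟩, rfl⟩; exact ⟨g, by group⟩
  have h4 : K * K = K * {x} := by
    have hsub : K * {x} ⊆ K * K :=
      Set.mul_subset_mul_left (Set.singleton_subset_iff.mpr hmemx)
    have hle : (K * K).ncard ≤ (K * {x}).ncard := by
      rw [hcc, himg, Set.mul_singleton]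
      calc ((fun a => a * a) '' K).ncard ≤ K.ncard := Set.ncard_image_le (Set.toFinite _)
        _ = ((· * x) '' K).ncard :=
            (Set.ncard_image_of_injective _ (mul_left_injective x)).symm
    exact (Set.eq_of_subset_of_ncard_le hsub hle (Set.toFinite _)).symm
  have memN : ∀ a : G, a ∈ K * ({x⁻¹} : Set G) ↔ ∃ k ∈ K, a = k * x⁻¹ := by
    intro a; rw [Set.mul_singleton]
    constructor
    · rintro ⟨k, hk, rfl⟩; exact ⟨k, hk, rfl⟩
    · rintro ⟨k, hk, rfl⟩; exact ⟨k, hk, rfl⟩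
  have hmul : ∀ a ∈ K * ({x⁻¹} : Set G), ∀ b ∈ K * ({x⁻¹} : Set G),
      a * b ∈ K * ({x⁻¹} : Set G) := by
    intro a ha b hb
    obtain ⟨k₁, hk₁, rfl⟩ := (memN a).1 ha
    obtain ⟨k₂, hk₂, rfl⟩ := (memN b).1 hb
    have hk₃ : x⁻¹ * k₂ * x ∈ K := conj_mem hk₂ x
    have hKK : k₁ * (x⁻¹ * k₂ * x) ∈ K * K := Set.mul_mem_mul hk₁ hk₃
    rw [h4, Set.mul_singleton] at hKK
    obtain ⟨k₄, hk₄, heq⟩ := hKK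
    refine (memN _).2 ⟨k₄, hk₄, ?_⟩
    have h5 : k₁ * x⁻¹ * (k₂ * x⁻¹) = k₁ * (x⁻¹ * k₂ * x) * x⁻¹ * x⁻¹ := by group
    rw [h5, ← heq]; group
  have hone : (1 : G) ∈ K * ({x⁻¹} : Set G) := (memN 1).2 ⟨x, hmemx, by group⟩
  have hpow : ∀ a ∈ K * ({x⁻¹} : Set G), ∀ n : ℕ, a ^ (n + 1) ∈ K * ({x⁻¹} : Set G) := by
    intro a ha n
    induction n with
    | zero => simpa using ha
    | succ m ihm => rw [pow_succ]; exact hmul _ ihm _ ha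
  have hinv : ∀ a ∈ K * ({x⁻¹} : Set G), a⁻¹ ∈ K * ({x⁻¹} : Set G) := by
    intro a ha
    have hop : 0 < orderOf a := orderOf_pos a
    have hoa : a * a ^ (orderOf a - 1) = 1 := by
      rw [← pow_succ', Nat.sub_add_cancel hop]
      exact pow_orderOf_eq_one a
    have hainv : a⁻¹ = a ^ (orderOf a - 1) := inv_eq_of_mul_eq_one_right hoa
    rcases Nat.lt_or_ge (orderOf a) 2 with hlt | hge
    · have h1 : orderOf a = 1 := by omega
      rw [hainv, h1]; simpa using hone
    · rw [hainv, show orderOf a - 1 = (orderOf a - 2) + 1 by omega]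
      exact hpow a ha _
  refine ⟨{ carrier := K * ({x⁻¹} : Set G)
            mul_mem' := fun ha hb => hmul _ ha _ hb
            one_mem' := hone
            inv_mem' := fun ha => hinv _ ha }, ?_, rfl, ?_⟩
  · constructor
    intro a ha g
    obtain ⟨k, hk, rfl⟩ := (memN a).1 ha
    have hk' : g * k * g⁻¹ ∈ K := by simpa using conj_mem hk g⁻¹
    have hw : g * x * g⁻¹ ∈ K := by simpa using conj_mem hmemx g⁻¹
    have hw1 : (g * x * g⁻¹) * x⁻¹ ∈ K * ({x⁻¹} : Set G) := (memN _).2 ⟨_, hw, rfl⟩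
    have hw2 : ((g * x * g⁻¹) * x⁻¹)⁻¹ ∈ K * ({x⁻¹} : Set G) := hinv _ hw1
    have hk1 : (g * k * g⁻¹) * x⁻¹ ∈ K * ({x⁻¹} : Set G) := (memN _).2 ⟨_, hk', rfl⟩
    have hfin : ((g * k * g⁻¹) * x⁻¹) * ((g * x * g⁻¹) * x⁻¹)⁻¹ ∈ K * ({x⁻¹} : Set G) :=
      hmul _ hk1 _ hw2
    have heq : g * (k * x⁻¹) * g⁻¹ =
        ((g * k * g⁻¹) * x⁻¹) * ((g * x * g⁻¹) * x⁻¹)⁻¹ := by group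
    rw [heq]; exact hfin
  · ext a
    constructor
    · intro ha
      rw [Set.singleton_mul]
      exact ⟨x⁻¹ * a, (memN _).2 ⟨x⁻¹ * a * x, conj_mem ha x, by group⟩, by group⟩
    · rw [Set.singleton_mul]
      rintro ⟨b, hb, rfl⟩
      obtain ⟨k, hk, rfl⟩ := (memN b).1 hb
      have h6 : (x⁻¹)⁻¹ * k * x⁻¹ ∈ K := conj_mem hk x⁻¹
      show x * (k * x⁻¹) ∈ K
      have h7 : x * (k * x⁻¹) = (x⁻¹)⁻¹ * k * x⁻¹ := by group
      rw [h7]; exact h6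


lemma pi_decomp (π : Set ℕ) : ∀ n : ℕ, n ≠ 0 →
    ∃ a b : ℕ, n = a * b ∧ IsPi π a ∧ (∀ p : ℕ, p.Prime → p ∣ b → p ∉ π) := by
  classical
  intro n
  induction n using Nat.strong_induction_on with
  | _ n ih =>
    intro hn
    by_cases hall : ∀ p, p.Prime → p ∣ n → p ∈ π
    · exact ⟨n, 1, by ring, hall, fun p hp hpd => absurd (Nat.eq_one_of_dvd_one hpd) hp.ne_one⟩
    · push_neg at hall
      obtain ⟨p, hp, hpn, hpπ⟩ := hall
      set k := n.factorization p with hk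
      set m := n / p ^ k with hm
      have hnm : p ^ k * m = n := Nat.ordProj_mul_ordCompl_eq_self n p
      have hkpos : 0 < k := hp.factorization_pos_of_dvd hn hpn
      have hppos : 1 < p ^ k := Nat.one_lt_pow hkpos.ne' hp.one_lt
      have hm0 : m ≠ 0 := by
        intro h0; rw [h0, mul_zero] at hnm; exact hn hnm.symm
      have hmn : m < n := by
        rw [← hnm]
        exact Nat.lt_mul_iff_one_lt_left (Nat.pos_of_ne_zero hm0) |>.mpr hppos
      obtain ⟨a, b, hab, haπ, hbπ⟩ := ih m hmn hm0
      refine ⟨a, p ^ k * b, by rw [← hnm, hab]; ring, haπ, ?_⟩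
      intro q hq hqd
      rcases (Nat.Prime.dvd_mul hq).mp hqd with h1 | h2
      · have : q = p := (Nat.prime_dvd_prime_iff_eq hq hp).mp (hq.dvd_of_dvd_pow h1)
        rwa [this]
      · exact hbπ q hq h2

lemma lift_pi {G Q : Type*} [Group G] [Finite G] [Group Q] (π : Set ℕ) (f : G →* Q) (x : G)
    (hx : IsPi π (orderOf (f x))) : ∃ y : G, IsPi π (orderOf y) ∧ f y = f x := by
  obtain ⟨a, b, hab, haπ, hbπ⟩ := pi_decomp π (orderOf x) (orderOf_pos x).ne'
  set m := orderOf (f x) with hmdef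
  have hmn : m ∣ orderOf x := orderOf_map_dvd f x
  have hcop_mb : Nat.Coprime m b := pi_coprime hx hbπ
  have hma : m ∣ a := hcop_mb.dvd_of_dvd_mul_right (hab ▸ hmn)
  have hcop_ba : Nat.Coprime b a := (pi_coprime haπ hbπ).symm
  rcases Nat.lt_or_ge 1 a with ha1 | ha1
  · obtain ⟨u, -, hu⟩ := Nat.exists_mul_mod_eq_one_of_coprime hcop_ba ha1
    refine ⟨x ^ (b * u), ?_, ?_⟩
    · intro p hp hpd
      apply haπ p hp
      refine dvd_trans hpd (orderOf_dvd_of_pow_eq_one ?_)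
      rw [← pow_mul, show b * u * a = orderOf x * u by rw [hab]; ring, pow_mul,
        pow_orderOf_eq_one, one_pow]
    · rw [map_pow]
      have h1 : b * u ≡ 1 [MOD a] := by
        unfold Nat.ModEq
        rw [hu, Nat.mod_eq_of_lt ha1]
      have h2 : b * u ≡ 1 [MOD m] := h1.of_dvd hma
      calc f x ^ (b * u) = f x ^ 1 := pow_eq_pow_iff_modEq.mpr h2
        _ = f x := pow_one _
  · have ha0 : a ≠ 0 := by
      intro h0; rw [h0, zero_mul] at hab; exact (orderOf_pos x).ne' hab
    have haeq : a = 1 := by omega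
    have hm1 : m = 1 := Nat.dvd_one.mp (haeq ▸ hma)
    refine ⟨1, ?_, ?_⟩
    · intro p hp hpd
      rw [orderOf_one] at hpd
      exact absurd (Nat.eq_one_of_dvd_one hpd) hp.ne_one
    · rw [map_one]
      exact (orderOf_eq_one_iff.mp hm1).symm

lemma hyp_quot {G Q : Type*} [Group G] [Finite G] [Group Q] (π : Set ℕ)
    (f : G →* Q) (hf : Function.Surjective f)
    (h : ∀ x : G, IsPi π (orderOf x) → ∃ c, conjClass x * conjClass x = conjClass c) :
    ∀ q : Q, IsPi π (orderOf q) → ∃ c, conjClass q * conjClass q = conjClass c := by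
  intro q hq
  obtain ⟨x, rfl⟩ := hf q
  obtain ⟨y, hy, hyx⟩ := lift_pi π f x hq
  obtain ⟨c, hc⟩ := h y hy
  refine ⟨f c, ?_⟩
  rw [← hyx, conjClass_image f hf y, ← Set.image_mul, hc, conjClass_image f hf c]

lemma card_comap_mk' {G : Type*} [Group G] [Finite G] (M : Subgroup G) [M.Normal]
    (Nbar : Subgroup (G ⧸ M)) :
    Nat.card (Nbar.comap (QuotientGroup.mk' M)) = Nat.card Nbar * Nat.card M := by
  set N := Nbar.comap (QuotientGroup.mk' M) with hN
  have hMle : M ≤ N := by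
    intro g hg
    rw [hN, Subgroup.mem_comap]
    have : (QuotientGroup.mk' M) g = 1 := (QuotientGroup.eq_one_iff g).mpr hg
    rw [this]; exact Nbar.one_mem
  set f : N →* G ⧸ M := (QuotientGroup.mk' M).comp N.subtype with hf
  have hker : MonoidHom.ker f = M.subgroupOf N := by
    ext y
    simp [hf, MonoidHom.mem_ker, Subgroup.mem_subgroupOf, QuotientGroup.eq_one_iff]
  have hrange : MonoidHom.range f = Nbar := by
    ext q
    constructor
    · rintro ⟨y, rfl⟩
      exact y.2
    · intro hq
      obtain ⟨g, rfl⟩ := QuotientGroup.mk'_surjective M q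
      exact ⟨⟨g, by rwa [hN, Subgroup.mem_comap]⟩, rfl⟩
  have h1 : Nat.card N = Nat.card (N ⧸ M.subgroupOf N) * Nat.card (M.subgroupOf N) :=
    Subgroup.card_eq_card_quotient_mul_card_subgroup _
  have h2 : Nat.card (M.subgroupOf N) = Nat.card M :=
    Nat.card_congr (Subgroup.subgroupOfEquivOfLe hMle).toEquiv
  have h3 : Nat.card (N ⧸ M.subgroupOf N) = Nat.card Nbar := by
    rw [← hker, ← hrange]
    exact Nat.card_congr (QuotientGroup.quotientKerEquivRange f).toEquiv
  rw [h1, h2, h3]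


lemma aux (π : Set ℕ) (hπ : ∀ p ∈ π, p.Prime) :
    ∀ (n : ℕ) (G : Type u) (_ : Group G) (_ : Finite G), Nat.card G ≤ n →
      (∀ x : G, IsPi π (orderOf x) → ∃ c, conjClass x * conjClass x = conjClass c) →
      ∃ (N : Subgroup G) (_ : N.Normal),
        (∀ p ∈ π, ¬ p ∣ Nat.card N) ∧ Group.IsNilpotent (G ⧸ N) := by
  intro n
  induction n with
  | zero =>
    intro G _ _ hcard _
    exact absurd hcard (by have := Nat.card_pos (α := G); omega)
  | succ n ih =>
    intro G _ _ hcard h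
    by_cases hM1 : ∃ M : Subgroup G, M.Normal ∧ M ≠ ⊥ ∧ ∀ p ∈ π, ¬ p ∣ Nat.card M
    · obtain ⟨M, hMnorm, hMbot, hMpi⟩ := hM1
      haveI := hMnorm
      have hqcard : Nat.card (G ⧸ M) ≤ n := by
        have h1 : Nat.card G = Nat.card (G ⧸ M) * Nat.card M :=
          Subgroup.card_eq_card_quotient_mul_card_subgroup M
        have h2 : 1 < Nat.card M := (Subgroup.one_lt_card_iff_ne_bot M).mpr hMbot
        have h3 : 0 < Nat.card (G ⧸ M) := Nat.card_pos
        nlinarith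
      obtain ⟨Nbar, hNbarnorm, hNbarpi, hNbarnil⟩ :=
        ih (G ⧸ M) inferInstance inferInstance hqcard
          (hyp_quot π (QuotientGroup.mk' M) (QuotientGroup.mk'_surjective M) h)
      haveI := hNbarnorm
      set N := Nbar.comap (QuotientGroup.mk' M) with hNdef
      haveI hNnorm : N.Normal := hNbarnorm.comap _
      have hMleN : M ≤ N := by
        intro g hg
        rw [hNdef, Subgroup.mem_comap]
        have : (QuotientGroup.mk' M) g = 1 := (QuotientGroup.eq_one_iff g).mpr hg
        rw [this]; exact Nbar.one_mem
      refine ⟨N, hNnorm, ?_, ?_⟩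
      · intro p hpπ hdvd
        rw [card_comap_mk'] at hdvd
        rcases (Nat.Prime.dvd_mul (hπ p hpπ)).mp hdvd with h1 | h2
        · exact hNbarpi p hpπ h1
        · exact hMpi p hpπ h2
      · -- surjection (G⧸M)⧸Nbar →* G⧸N
        let φ : (G ⧸ M) →* (G ⧸ N) :=
          QuotientGroup.map M N (MonoidHom.id G) (by simpa using hMleN)
        have hφker : ∀ q ∈ Nbar, φ q = 1 := by
          intro q hq
          obtain ⟨g, rfl⟩ := QuotientGroup.mk'_surjective M q
          have hgN : g ∈ N := by rwa [hNdef, Subgroup.mem_comap]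
          show φ (QuotientGroup.mk g) = 1
          rw [QuotientGroup.map_mk]
          simpa using (QuotientGroup.eq_one_iff g).mpr hgN
        let ψ : ((G ⧸ M) ⧸ Nbar) →* (G ⧸ N) :=
          QuotientGroup.lift Nbar φ hφker
        have hψsurj : Function.Surjective ψ := by
          intro q
          obtain ⟨g, rfl⟩ := QuotientGroup.mk'_surjective N q
          refine ⟨QuotientGroup.mk (QuotientGroup.mk g), ?_⟩
          show φ (QuotientGroup.mk g) = _
          rw [QuotientGroup.map_mk]
          rfl
        haveI := hNbarnil
        exact nilpotent_of_surjective ψ hψsurj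
    · by_cases hM2 : ∃ z : G, z ≠ 1 ∧ IsPi π (orderOf z) ∧ z ∈ Subgroup.center G
      · -- Case 2 : nontrivial central π-element
        obtain ⟨z, hz1, hzπ, hzc⟩ := hM2
        set M := Subgroup.zpowers z with hMdef
        have hMcent : M ≤ Subgroup.center G := Subgroup.zpowers_le.mpr hzc
        haveI hMnorm : M.Normal := by
          constructor
          intro a ha g
          have hcm := Subgroup.mem_center_iff.mp (hMcent ha) g
          have : g * a * g⁻¹ = a := by rw [hcm]; group
          rwa [this]
        have hMcard : Nat.card M = orderOf z := Nat.card_zpowers z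
        have hMcardπ : IsPi π (Nat.card M) := by rwa [hMcard]
        have hM1lt : 1 < Nat.card M := by
          rw [hMcard]
          have h1 := orderOf_pos z
          rcases Nat.lt_or_ge 1 (orderOf z) with h2 | h2
          · exact h2
          · exact absurd (orderOf_eq_one_iff.mp (by omega)) hz1
        have hqcard : Nat.card (G ⧸ M) ≤ n := by
          have h1 : Nat.card G = Nat.card (G ⧸ M) * Nat.card M :=
            Subgroup.card_eq_card_quotient_mul_card_subgroup M
          have h3 : 0 < Nat.card (G ⧸ M) := Nat.card_pos
          nlinarith
        obtain ⟨Nbar, hNbarnorm, hNbarpi, hNbarnil⟩ :=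
          ih (G ⧸ M) inferInstance inferInstance hqcard
            (hyp_quot π (QuotientGroup.mk' M) (QuotientGroup.mk'_surjective M) h)
        haveI := hNbarnorm
        set K := Nbar.comap (QuotientGroup.mk' M) with hKdef
        haveI hKnorm : K.Normal := hNbarnorm.comap _
        have hMleK : M ≤ K := by
          intro g hg
          rw [hKdef, Subgroup.mem_comap]
          have : (QuotientGroup.mk' M) g = 1 := (QuotientGroup.eq_one_iff g).mpr hg
          rw [this]; exact Nbar.one_mem
        have hKcard : Nat.card K = Nat.card Nbar * Nat.card M := card_comap_mk' M Nbar
        -- Schur–Zassenhaus for the central Hall π-subgroup M of K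
        set M' := M.subgroupOf K with hM'def
        haveI hM'norm : M'.Normal := hMnorm.subgroupOf K
        have hM'card : Nat.card M' = Nat.card M :=
          Nat.card_congr (Subgroup.subgroupOfEquivOfLe hMleK).toEquiv
        have hM'index : M'.index = Nat.card Nbar := by
          have h1 : Nat.card M' * M'.index = Nat.card K := Subgroup.card_mul_index M'
          rw [hM'card, hKcard, mul_comm (Nat.card Nbar) (Nat.card M)] at h1
          have h2 : 0 < Nat.card M := Nat.card_pos
          exact Nat.eq_of_mul_eq_mul_left h2 h1
        have hcop : Nat.Coprime (Nat.card M') M'.index := by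
          rw [hM'card, hM'index]
          exact pi_coprime hMcardπ (fun p hp hpd hpπ => hNbarpi p hpπ hpd)
        obtain ⟨H', hH'⟩ := Subgroup.exists_right_complement'_of_coprime hcop
        set H := H'.map K.subtype with hHdef
        have hHleK : H ≤ K := Subgroup.map_subtype_le H'
        have hH'card : Nat.card H' = Nat.card Nbar := by
          have h1 : Nat.card M' * Nat.card H' = Nat.card K := hH'.card_mul
          rw [hM'card, hKcard, mul_comm (Nat.card Nbar) (Nat.card M)] at h1
          have h2 : 0 < Nat.card M := Nat.card_pos
          exact Nat.eq_of_mul_eq_mul_left h2 h1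
        have hHcard : Nat.card H = Nat.card Nbar := by
          rw [← hH'card]
          exact (Nat.card_congr
            (Subgroup.equivMapOfInjective H' K.subtype K.subtype_injective).toEquiv).symm
        have hdecomp : ∀ k ∈ K, ∃ m₀ h₀ : G, m₀ ∈ M ∧ h₀ ∈ H ∧ k = m₀ * h₀ := by
          intro k hk
          obtain ⟨⟨m, h'⟩, heq⟩ := (hH'.existsUnique (⟨k, hk⟩ : K)).exists
          refine ⟨((m : K) : G), ((h' : K) : G), Subgroup.mem_subgroupOf.mp m.2, ?_, ?_⟩
          · exact ⟨(h' : K), h'.2, rfl⟩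
          · have := congrArg (fun y : K => (y : G)) heq
            simpa using this.symm
        have hordM : ∀ g : G, g ∈ M → IsPi π (orderOf g) := by
          intro g hg p hp hpd
          apply hzπ p hp
          have h0 : orderOf (⟨g, hg⟩ : M) ∣ Nat.card M := orderOf_dvd_natCard _
          have h1 : orderOf ((⟨g, hg⟩ : M) : G) = orderOf (⟨g, hg⟩ : M) :=
            Subgroup.orderOf_coe _
          rw [hMcard] at h0
          exact dvd_trans hpd (h1 ▸ h0)
        have hordH : ∀ g : G, g ∈ H → ∀ p : ℕ, p.Prime → p ∣ orderOf g → p ∉ π := by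
          intro g hg p hp hpd hpπ
          apply hNbarpi p hpπ
          have h0 : orderOf (⟨g, hg⟩ : H) ∣ Nat.card H := orderOf_dvd_natCard _
          have h1 : orderOf ((⟨g, hg⟩ : H) : G) = orderOf (⟨g, hg⟩ : H) :=
            Subgroup.orderOf_coe _
          rw [hHcard] at h0
          exact dvd_trans hpd (h1 ▸ h0)
        have hHchar : ∀ g : G, g ∈ H ↔
            (g ∈ K ∧ ∀ p : ℕ, p.Prime → p ∣ orderOf g → p ∉ π) := by
          intro g
          constructor
          · intro hg
            exact ⟨hHleK hg, hordH g hg⟩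
          · rintro ⟨hgK, hgord⟩
            obtain ⟨m₀, h₀, hm₀, hh₀, hk_eq⟩ := hdecomp g hgK
            have hcomm : Commute m₀ h₀ := (Subgroup.mem_center_iff.mp (hMcent hm₀) h₀).symm
            have hcopr : Nat.Coprime (orderOf m₀) (orderOf h₀) :=
              pi_coprime (hordM m₀ hm₀) (hordH h₀ hh₀)
            have hord : orderOf g = orderOf m₀ * orderOf h₀ := by
              rw [hk_eq]
              exact hcomm.orderOf_mul_eq_mul_orderOf_of_coprime hcopr
            have hm₀1 : orderOf m₀ = 1 := by
              rw [Nat.eq_one_iff_not_exists_prime_dvd]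
              intro p hp hpd
              exact hgord p hp (hord ▸ Dvd.dvd.mul_right hpd (orderOf h₀))
                (hordM m₀ hm₀ p hp hpd)
            have : m₀ = 1 := orderOf_eq_one_iff.mp hm₀1
            rw [hk_eq, this, one_mul]
            exact hh₀
        haveI hHnorm : H.Normal := by
          constructor
          intro a ha g
          obtain ⟨haK, haord⟩ := (hHchar a).mp ha
          refine (hHchar _).mpr ⟨hKnorm.conj_mem a haK g, ?_⟩
          intro p hp hpd
          apply haord p hp
          have : orderOf (g * a * g⁻¹) = orderOf a := by
            have := MulEquiv.orderOf_eq (MulAut.conj g) a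
            simpa [MulAut.conj_apply] using this
          rwa [this] at hpd
        have hcentquot : ∀ k ∈ K, ∀ g : G, g * k * g⁻¹ * k⁻¹ ∈ H := by
          intro k hk g
          obtain ⟨m₀, h₀, hm₀, hh₀, rfl⟩ := hdecomp k hk
          have hzc' : ∀ w : G, w * m₀ = m₀ * w := Subgroup.mem_center_iff.mp (hMcent hm₀)
          have heq : g * (m₀ * h₀) * g⁻¹ * (m₀ * h₀)⁻¹ = (g * h₀ * g⁻¹) * h₀⁻¹ := by
            calc g * (m₀ * h₀) * g⁻¹ * (m₀ * h₀)⁻¹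
                = (g * m₀) * (h₀ * g⁻¹ * (h₀⁻¹ * m₀⁻¹)) := by group
              _ = (m₀ * g) * (h₀ * g⁻¹ * (h₀⁻¹ * m₀⁻¹)) := by rw [hzc' g]
              _ = m₀ * (g * h₀ * g⁻¹ * h₀⁻¹) * m₀⁻¹ := by group
              _ = (g * h₀ * g⁻¹ * h₀⁻¹) * m₀ * m₀⁻¹ := by
                  rw [← hzc' (g * h₀ * g⁻¹ * h₀⁻¹)]
              _ = (g * h₀ * g⁻¹) * h₀⁻¹ := by group
          rw [heq]
          exact H.mul_mem (hHnorm.conj_mem h₀ hh₀ g) (H.inv_mem hh₀)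
        have hKbar_central : ∀ k ∈ K,
            (QuotientGroup.mk k : G ⧸ H) ∈ Subgroup.center (G ⧸ H) := by
          intro k hk
          rw [Subgroup.mem_center_iff]
          intro q
          obtain ⟨g, rfl⟩ := QuotientGroup.mk'_surjective H q
          show QuotientGroup.mk g * QuotientGroup.mk k = QuotientGroup.mk k * QuotientGroup.mk g
          rw [← QuotientGroup.mk_mul, ← QuotientGroup.mk_mul]
          apply QuotientGroup.eq.mpr
          have hmem := hcentquot k⁻¹ (K.inv_mem hk) g⁻¹
          have hmem2 := H.inv_mem hmem
          have heq2 : (g * k)⁻¹ * (k * g) = (g⁻¹ * k⁻¹ * g⁻¹⁻¹ * k⁻¹⁻¹)⁻¹ := by group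
          rwa [heq2]
        -- conclusion of Case 2
        refine ⟨H, hHnorm, ?_, ?_⟩
        · intro p hpπ hdvd
          rw [hHcard] at hdvd
          exact hNbarpi p hpπ hdvd
        · set Z := Subgroup.center (G ⧸ H) with hZdef
          haveI : Z.Normal := inferInstance
          let φ₀ : G →* (G ⧸ H) ⧸ Z := (QuotientGroup.mk' Z).comp (QuotientGroup.mk' H)
          have hφ₀K : ∀ g ∈ K, φ₀ g = 1 := by
            intro g hg
            exact (QuotientGroup.eq_one_iff _).mpr (hKbar_central g hg)
          have hφ₀M : ∀ g ∈ M, φ₀ g = 1 := fun g hg => hφ₀K g (hMleK hg)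
          let φ₁ : (G ⧸ M) →* (G ⧸ H) ⧸ Z := QuotientGroup.lift M φ₀ hφ₀M
          have hφ₁Nbar : ∀ q ∈ Nbar, φ₁ q = 1 := by
            intro q hq
            obtain ⟨g, rfl⟩ := QuotientGroup.mk'_surjective M q
            have hgK : g ∈ K := by rwa [hKdef, Subgroup.mem_comap]
            show φ₀ g = 1
            exact hφ₀K g hgK
          let ψ : ((G ⧸ M) ⧸ Nbar) →* (G ⧸ H) ⧸ Z := QuotientGroup.lift Nbar φ₁ hφ₁Nbar
          have hψsurj : Function.Surjective ψ := by
            intro q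
            obtain ⟨q', rfl⟩ := QuotientGroup.mk'_surjective Z q
            obtain ⟨g, rfl⟩ := QuotientGroup.mk'_surjective H q'
            exact ⟨QuotientGroup.mk (QuotientGroup.mk g), rfl⟩
          haveI := hNbarnil
          have hnil : Group.IsNilpotent ((G ⧸ H) ⧸ Z) := nilpotent_of_surjective ψ hψsurj
          exact of_quotient_center_nilpotent hnil
      · -- Case 3 : no nontrivial normal π'-subgroup, no nontrivial central π-element
        push_neg at hM1 hM2
        have hgen : ∀ x : G, IsPi π (orderOf x) → x ≠ 1 →
            ∃ N : Subgroup G, N.Normal ∧ N ≠ ⊥ ∧ (N : Set G) = conjClass x * {x⁻¹} ∧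
              conjClass x = {x} * (N : Set G) := by
          intro x hxπ hx1
          obtain ⟨c, hc⟩ := h x hxπ
          obtain ⟨N, hNn, hNs, hNk⟩ := key x c hc
          refine ⟨N, hNn, ?_, hNs, hNk⟩
          intro hbot
          apply hM2 x hx1 hxπ
          have hcx : conjClass x = {x} := by
            rw [hNk, hbot]
            simp
          rw [Subgroup.mem_center_iff]
          intro g
          have hg : g⁻¹ * x * g ∈ conjClass x := ⟨g, rfl⟩
          rw [hcx, Set.mem_singleton_iff] at hg
          calc g * x = g * (g⁻¹ * x * g) := by rw [hg]
            _ = x * g := by group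
        have htriv : ∀ x : G, IsPi π (orderOf x) → x = 1 := by
          intro x hxπ
          by_contra hx1
          have hPex : ∃ k : ℕ, ∃ x' : G, IsPi π (orderOf x') ∧ x' ≠ 1 ∧
              ∃ N : Subgroup G, N.Normal ∧ N ≠ ⊥ ∧ (N : Set G) = conjClass x' * {x'⁻¹} ∧
                conjClass x' = {x'} * (N : Set G) ∧ Nat.card N = k := by
            obtain ⟨N, h1, h2, h3, h4⟩ := hgen x hxπ hx1
            exact ⟨Nat.card N, x, hxπ, hx1, N, h1, h2, h3, h4, rfl⟩
          classical
          obtain ⟨x₀, hx₀π, hx₀1, N, hNnorm, hNbot, hNset, hNclass, hNcard⟩ :=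
            Nat.find_spec hPex
          haveI := hNnorm
          obtain ⟨p, hpπ, hpdvd⟩ := hM1 N hNnorm hNbot
          haveI : Fact p.Prime := ⟨hπ p hpπ⟩
          obtain ⟨u', hu'⟩ := exists_prime_orderOf_dvd_card' (G := N) p hpdvd
          set u := (u' : G) with hudef
          have huord : orderOf u = p := by rw [hudef, Subgroup.orderOf_coe, hu']
          have hu1 : u ≠ 1 := by
            intro h0
            rw [h0, orderOf_one] at huord
            exact (hπ p hpπ).ne_one huord.symm
          have huπ : IsPi π (orderOf u) := by
            intro q hq hqd
            rw [huord] at hqd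
            rwa [(Nat.prime_dvd_prime_iff_eq hq (hπ p hpπ)).mp hqd]
          have huN : u ∈ N := u'.2
          obtain ⟨Nu, hNunorm, hNubot, hNuset, hNuclass⟩ := hgen u huπ hu1
          have hNuleN : Nu ≤ N := by
            intro a ha
            have ha' : a ∈ (Nu : Set G) := ha
            rw [hNuset, Set.mul_singleton] at ha'
            obtain ⟨k, hk, rfl⟩ := ha'
            obtain ⟨g, rfl⟩ := hk
            have h5 : g⁻¹ * u * g ∈ N := by
              have := hNnorm.conj_mem u huN g⁻¹
              simpa using this
            exact N.mul_mem h5 (N.inv_mem huN)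
          have hkle : Nat.find hPex ≤ Nat.card Nu :=
            Nat.find_min' hPex ⟨u, huπ, hu1, Nu, hNunorm, hNubot, hNuset, hNuclass, rfl⟩
          have hcard_le : Nat.card Nu ≤ Nat.card N := Subgroup.card_le_of_le hNuleN
          have hcard_eq : Nat.card N ≤ Nat.card Nu := by omega
          have hNueqN : Nu = N := by
            apply SetLike.coe_injective
            apply Set.eq_of_subset_of_ncard_le (fun a ha => hNuleN ha) ?_ (Set.toFinite _)
            have e1 : (Nu : Set G).ncard = Nat.card Nu := (Nat.card_coe_set_eq _).symm
            have e2 : (N : Set G).ncard = Nat.card N := (Nat.card_coe_set_eq _).symm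
            omega
          have huNu : u ∈ Nu := hNueqN ▸ huN
          have h1mem : (1 : G) ∈ conjClass u := by
            rw [hNuclass, Set.singleton_mul]
            exact ⟨u⁻¹, Nu.inv_mem huNu, by group⟩
          obtain ⟨g, hg⟩ := h1mem
          apply hu1
          have h6 : u = g * 1 * g⁻¹ := by rw [hg]; group
          simpa using h6
        refine ⟨⊤, inferInstance, ?_, ?_⟩
        · intro p hpπ hdvd
          haveI : Fact p.Prime := ⟨hπ p hpπ⟩
          have hdvd' : p ∣ Nat.card G := by rwa [Subgroup.card_top] at hdvd
          obtain ⟨g, hg⟩ := exists_prime_orderOf_dvd_card' (G := G) p hdvd'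
          have hgπ : IsPi π (orderOf g) := by
            intro q hq hqd
            rw [hg] at hqd
            rwa [(Nat.prime_dvd_prime_iff_eq hq (hπ p hpπ)).mp hqd]
          have h7 := htriv g hgπ
          rw [h7, orderOf_one] at hg
          exact (hπ p hpπ).ne_one hg.symm
        · haveI : Subsingleton (G ⧸ (⊤ : Subgroup G)) :=
            QuotientGroup.subsingleton_quotient_top
          exact ⟨0, by
            rw [upperCentralSeries_zero]
            ext q
            simp [Subsingleton.elim q 1]⟩


end CorE

/-- **Corollary E.** Let `π` be a set of primes of a finite group `G`. If for every
`π`-element `x` of `G` the square of the conjugacy class `x^G` is a single conjugacy class,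
then there is a normal `π'`-subgroup `N` of `G` (namely `O_{π'}(G)`) such that `G/N` is
nilpotent. -/
theorem squares_of_pi_classes_nilpotent_quotient
    {G : Type*} [Group G] [Fintype G] (π : Set ℕ) (hπ : ∀ p ∈ π, p.Prime)
    (h : ∀ x : G, (∀ p : ℕ, p.Prime → p ∣ orderOf x → p ∈ π) →
      ∃ c : G, conjClass x * conjClass x = conjClass c) :
    ∃ (N : Subgroup G) (_ : N.Normal),
      (∀ p ∈ π, ¬ p ∣ Nat.card N) ∧ Group.IsNilpotent (G ⧸ N) := by
  exact CorE.aux π hπ (Nat.card G) G inferInstance inferInstance le_rfl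
    (fun x hx => h x hx)
end

section
/- Let G be a finite group, let x ∈ G with x ≠ 1, and let K = x^G. If K² = {1} ∪ K, then ⟨K⟩ is a minimal normal subgroup of G (i.e. ⟨K⟩ is a nontrivial normal subgroup and every normal subgroup of G strictly contained in ⟨K⟩ is trivial) and ⟨K⟩ is an elementary abelian p-group for some prime p. -/
open Pointwise

private lemma conj_pow_eq {G : Type*} [Group G] (g x : G) (n : ℕ) :
    (g⁻¹ * x * g) ^ n = g⁻¹ * x ^ n * g := by
  induction n with
  | zero => simp
  | succ k ih => rw [pow_succ, pow_succ, ih]; group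

/-- **Lemma 1(b).** If `K = x^G` is a conjugacy class of a finite group `G` with `x ≠ 1`
and `K² = {1} ∪ K`, then `⟨K⟩` is a minimal normal subgroup of `G` and it is an elementary
abelian `p`-group for some prime `p`. -/
theorem square_eq_one_union_self
    {G : Type*} [Group G] [Fintype G] (x : G) (hx : x ≠ 1) (K : Set G)
    (hK : K = conjClass x) (hKK : K * K = {1} ∪ K) :
    (Subgroup.closure K).Normal ∧
    Subgroup.closure K ≠ ⊥ ∧
    (∀ H : Subgroup G, H.Normal → H < Subgroup.closure K → H = ⊥) ∧
    ∃ p : ℕ, p.Prime ∧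
      (∀ a ∈ Subgroup.closure K, ∀ b ∈ Subgroup.closure K, a * b = b * a) ∧
      (∀ g ∈ Subgroup.closure K, g ^ p = 1) := by
  -- basic facts about K
  have hxK : x ∈ K := by rw [hK]; exact ⟨1, by group⟩
  have hconjK : ∀ k ∈ K, ∀ g : G, g⁻¹ * k * g ∈ K := by
    intro k hk g
    rw [hK] at hk ⊢
    obtain ⟨h, rfl⟩ := hk
    exact ⟨h * g, by group⟩
  -- the conjugacy class of any element of K is K
  have hclassEq : ∀ y ∈ K, conjClass y = K := by
    intro y hy
    rw [hK] at hy
    obtain ⟨g, rfl⟩ := hy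
    ext a
    constructor
    · rintro ⟨h, rfl⟩
      rw [hK]; exact ⟨g * h, by group⟩
    · intro ha
      rw [hK] at ha
      obtain ⟨h, rfl⟩ := ha
      exact ⟨g⁻¹ * h, by group⟩
  -- K is closed under inverses
  have hKinv : ∀ k ∈ K, k⁻¹ ∈ K := by
    have h1 : (1 : G) ∈ K * K := by rw [hKK]; exact Or.inl rfl
    obtain ⟨a, ha, b, hb, hab⟩ := h1
    have hainv : a⁻¹ ∈ K := by
      have : b = a⁻¹ := eq_inv_of_mul_eq_one_right hab
      rwa [← this]
    intro k hk
    have : k ∈ conjClass a := by rw [hclassEq a ha]; exact hk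
    obtain ⟨g, rfl⟩ := this
    have := hconjK a⁻¹ hainv g
    simpa [mul_assoc] using this
  -- the subgroup with carrier {1} ∪ K
  let N : Subgroup G :=
    { carrier := {1} ∪ K
      one_mem' := Or.inl rfl
      mul_mem' := by
        rintro a b (rfl | ha) hb
        · simpa using hb
        · rcases hb with rfl | hb
          · simpa using Or.inr ha
          · have : a * b ∈ K * K := Set.mul_mem_mul ha hb
            rwa [hKK] at this
      inv_mem' := by
        rintro a (rfl | ha)
        · exact Or.inl (by simp)
        · exact Or.inr (hKinv a ha) }
  have hNcl : Subgroup.closure K = N := by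
    apply le_antisymm
    · rw [Subgroup.closure_le]
      intro a ha; exact Or.inr ha
    · rintro a (rfl | ha)
      · exact Subgroup.one_mem _
      · exact Subgroup.subset_closure ha
  have hmem : ∀ w : G, w ∈ Subgroup.closure K ↔ w = 1 ∨ w ∈ K := by
    intro w
    rw [hNcl]
    exact Iff.rfl
  -- Normality
  have hNormal : (Subgroup.closure K).Normal := by
    constructor
    intro a ha g
    rw [hmem] at ha ⊢
    rcases ha with rfl | ha
    · exact Or.inl (by simp)
    · refine Or.inr ?_
      have := hconjK a ha g⁻¹
      simpa using this
  refine ⟨hNormal, ?_, ?_, ?_⟩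
  · -- nontrivial
    intro hbot
    have : x ∈ Subgroup.closure K := Subgroup.subset_closure hxK
    rw [hbot, Subgroup.mem_bot] at this
    exact hx this
  · -- minimality
    intro H hHn hHlt
    by_contra hne
    obtain ⟨h, hhH, hh1⟩ := H.bot_or_exists_ne_one.resolve_left hne
    have hhN : h ∈ Subgroup.closure K := le_of_lt hHlt hhH
    have hhK : h ∈ K := ((hmem h).1 hhN).resolve_left hh1
    have hKH : K ⊆ (H : Set G) := by
      intro c hc
      have : c ∈ conjClass h := by rw [hclassEq h hhK]; exact hc
      obtain ⟨g, rfl⟩ := this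
      have := hHn.conj_mem h hhH g⁻¹
      simpa [mul_assoc] using this
    have : Subgroup.closure K ≤ H := (Subgroup.closure_le H).2 hKH
    exact absurd (le_antisymm (le_of_lt hHlt) this) (ne_of_lt hHlt)
  · -- elementary abelian p-group
    have hn0 : orderOf x ≠ 0 := (orderOf_pos x).ne'
    have hn1 : orderOf x ≠ 1 := by simpa [orderOf_eq_one_iff] using hx
    set n := orderOf x with hn
    set p := n.minFac with hp
    have hpprime : p.Prime := Nat.minFac_prime hn1
    -- x ^ p = 1
    have hxp : x ^ p = 1 := by
      have hyp : (x ^ (n / p)) ^ p = 1 := by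
        rw [← pow_mul, Nat.div_mul_cancel (Nat.minFac_dvd n), hn, pow_orderOf_eq_one]
      have hy1 : x ^ (n / p) ≠ 1 := by
        intro h1
        have hdvd : n ∣ n / p := hn ▸ orderOf_dvd_of_pow_eq_one h1
        have hlt : n / p < n := Nat.div_lt_self (Nat.pos_of_ne_zero hn0) hpprime.one_lt
        have hpos : 0 < n / p := Nat.div_pos (Nat.minFac_le (Nat.pos_of_ne_zero hn0)) hpprime.pos
        exact absurd (Nat.le_of_dvd hpos hdvd) (not_le.2 hlt)
      have hyN : x ^ (n / p) ∈ Subgroup.closure K :=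
        Subgroup.pow_mem _ (Subgroup.subset_closure hxK) _
      have hyK : x ^ (n / p) ∈ K := ((hmem _).1 hyN).resolve_left hy1
      have : x ^ (n / p) ∈ conjClass x := by rw [← hK]; exact hyK
      obtain ⟨g, hg⟩ := this
      have h2 : (g⁻¹ * x * g) ^ p = 1 := by rw [← hg]; exact hyp
      rw [conj_pow_eq] at h2
      have := congrArg (fun w => g * w * g⁻¹) h2
      simpa [mul_assoc] using this
    have hKp : ∀ k ∈ K, k ^ p = 1 := by
      intro k hk
      rw [hK] at hk
      obtain ⟨g, rfl⟩ := hk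
      rw [conj_pow_eq, hxp]
      group
    -- the closure is a p-group
    have hpg : IsPGroup p (Subgroup.closure K) := by
      intro g
      refine ⟨1, ?_⟩
      rcases (hmem (g : G)).1 g.2 with h1 | hgK
      · ext; simp [h1]
      · ext
        push_cast
        simpa using hKp _ hgK
    haveI : Fact p.Prime := ⟨hpprime⟩
    haveI hnontriv : Nontrivial (Subgroup.closure K) := by
      refine ⟨⟨x, Subgroup.subset_closure hxK⟩, 1, ?_⟩
      intro h
      exact hx (congrArg Subtype.val h)
    haveI hcenter := hpg.center_nontrivial
    obtain ⟨z, hz1⟩ := exists_ne (1 : Subgroup.center (Subgroup.closure K))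
    -- the underlying element of z
    set zv : G := ((z : Subgroup.closure K) : G) with hzv
    have hzv1 : zv ≠ 1 := by
      intro h
      apply hz1
      ext
      exact h
    have hzvN : zv ∈ Subgroup.closure K := (z : Subgroup.closure K).2
    have hzvK : zv ∈ K := ((hmem zv).1 hzvN).resolve_left hzv1
    -- zv commutes with everything in the closure
    have hcomm0 : ∀ b ∈ Subgroup.closure K, zv * b = b * zv := by
      intro b hb
      have := (Subgroup.mem_center_iff.1 z.2) ⟨b, hb⟩
      exact congrArg Subtype.val this |>.symm
    -- every element of K commutes with everything in the closure
    have hcommK : ∀ a ∈ K, ∀ b ∈ Subgroup.closure K, a * b = b * a := by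
      intro a ha b hb
      have : a ∈ conjClass zv := by rw [hclassEq zv hzvK]; exact a |> fun _ => ha
      obtain ⟨g, rfl⟩ := this
      have hb' : g * b * g⁻¹ ∈ Subgroup.closure K := hNormal.conj_mem b hb g
      have hc := hcomm0 _ hb'
      calc g⁻¹ * zv * g * b = g⁻¹ * (zv * (g * b * g⁻¹)) * g := by group
        _ = g⁻¹ * ((g * b * g⁻¹) * zv) * g := by rw [hc]
        _ = b * (g⁻¹ * zv * g) := by group
    refine ⟨p, hpprime, ?_, ?_⟩
    · intro a ha b hb
      rcases (hmem a).1 ha with rfl | haK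
      · simp
      · exact hcommK a haK b hb
    · intro g hg
      rcases (hmem g).1 hg with rfl | hgK
      · simp
      · exact hKp g hgK
end

section
/- Let G be a finite group, let x ∈ G with x of order strictly greater than 2, let K = x^G with |K| ≥ 3, and suppose that K² = {1} ∪ D where D = d^G is the conjugacy class of some element d ≠ 1 of G. Then K⁴ = D², where K⁴ = K²·K² and D² = D·D. -/
open Pointwise

/-- In Case 2.b of Theorem A: if `x` has order greater than 2, `K = x^G` has size at least
3 and `K² = {1} ∪ D` for a conjugacy class `D = d^G` of a non-identity element `d`, then
`K⁴ = D²`. -/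
theorem square_of_class_case_2b_fourth_power
    {G : Type*} [Group G] [Fintype G] (x d : G)
    (hx : 2 < orderOf x) (hd : d ≠ 1)
    (K D : Set G) (hK : K = conjClass x) (hD : D = conjClass d)
    (hKcard : 3 ≤ K.ncard)
    (hKD : K * K = {1} ∪ D) :
    (K * K) * (K * K) = D * D := by
  -- 1 ∈ K * K
  have h1K : (1 : G) ∈ K * K := by
    rw [hKD]; exact Or.inl rfl
  obtain ⟨a0, ha0, b0, hb0, hab0⟩ := h1K
  have hb0eq : b0 = a0⁻¹ := eq_inv_of_mul_eq_one_right hab0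
  -- x⁻¹ ∈ K, hence K is closed under inverses
  have hxinvK : x⁻¹ ∈ K := by
    subst hK
    obtain ⟨g, hg⟩ := ha0
    obtain ⟨h, hh⟩ := hb0
    subst hb0eq
    have : g⁻¹ * x⁻¹ * g = h⁻¹ * x * h := by
      rw [← hh, hg]; group
    refine ⟨h * g⁻¹, ?_⟩
    have := congrArg (fun y => g * y * g⁻¹) this
    rw [show (h * g⁻¹)⁻¹ * x * (h * g⁻¹) = g * (h⁻¹ * x * h) * g⁻¹ by group,
      ← this]
    group
  have hinv : ∀ k ∈ K, k⁻¹ ∈ K := by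
    intro k hk
    rw [hK] at hk hxinvK ⊢
    obtain ⟨g, hg⟩ := hk
    obtain ⟨w, hw⟩ := hxinvK
    refine ⟨w * g, ?_⟩
    rw [hg, show (w * g)⁻¹ * x * (w * g) = g⁻¹ * (w⁻¹ * x * w) * g by group, ← hw]
    group
  -- 1 ∉ D
  have h1D : (1 : G) ∉ D := by
    rw [hD]
    rintro ⟨g, hg⟩
    apply hd
    have := congrArg (fun y => g * y * g⁻¹) hg
    rw [show g * (g⁻¹ * d * g) * g⁻¹ = d by group] at this
    simp [← this]
  -- D is closed under inverses
  have hDinv : ∀ t ∈ D, t⁻¹ ∈ D := by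
    intro t ht
    have htK : t ∈ K * K := by rw [hKD]; exact Or.inr ht
    obtain ⟨u, hu, v, hv, huv⟩ := htK
    have : t⁻¹ ∈ K * K := ⟨v⁻¹, hinv v hv, u⁻¹, hinv u hu, by rw [← huv]; group⟩
    rw [hKD] at this
    rcases this with h | h
    · exfalso
      apply h1D
      have : t = 1 := by
        have : t⁻¹ = 1 := h
        simpa using congrArg (·⁻¹) this
      rw [← this]; exact ht
    · exact h
  -- D ⊆ D * D
  have hDsub : D ⊆ D * D := by
    intro t ht
    have htK : t ∈ K * K := by rw [hKD]; exact Or.inr ht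
    obtain ⟨a, ha, b, hb, hab⟩ := htK
    -- pick c ∈ K with c ≠ a⁻¹ and c ≠ b
    have : ∃ c ∈ K, c ∉ ({a⁻¹, b} : Set G) := by
      by_contra hcon
      push_neg at hcon
      have hsub : K ⊆ ({a⁻¹, b} : Set G) := hcon
      have := Set.ncard_le_ncard hsub (Set.toFinite _)
      have h2 : ({a⁻¹, b} : Set G).ncard ≤ 2 := by
        apply le_trans (Set.ncard_insert_le _ _)
        simp
      omega
    obtain ⟨c, hc, hcne⟩ := this
    simp only [Set.mem_insert_iff, Set.mem_singleton_iff, not_or] at hcne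
    obtain ⟨hc1, hc2⟩ := hcne
    have hacD : a * c ∈ D := by
      have : a * c ∈ K * K := ⟨a, ha, c, hc, rfl⟩
      rw [hKD] at this
      rcases this with h | h
      · exact absurd (eq_inv_of_mul_eq_one_right h) hc1
      · exact h
    have hcbD : c⁻¹ * b ∈ D := by
      have : c⁻¹ * b ∈ K * K := ⟨c⁻¹, hinv c hc, b, hb, rfl⟩
      rw [hKD] at this
      rcases this with h | h
      · exact absurd (inv_mul_eq_one.mp h) hc2
      · exact h
    exact ⟨a * c, hacD, c⁻¹ * b, hcbD, by rw [← hab]; group⟩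
  -- 1 ∈ D * D
  have hdD : d ∈ D := by rw [hD]; exact ⟨1, by group⟩
  have h1DD : (1 : G) ∈ D * D := ⟨d, hdD, d⁻¹, hDinv d hdD, by group⟩
  -- conclude
  apply subset_antisymm
  · intro y hy
    obtain ⟨u, hu, v, hv, huv⟩ := hy
    rw [hKD] at hu hv
    have huv' : u * v = y := huv
    rcases hu with hu | hu <;> rcases hv with hv | hv
    · rw [Set.mem_singleton_iff] at hu hv
      rw [← huv', hu, hv, mul_one]; exact h1DD
    · rw [Set.mem_singleton_iff] at hu
      rw [← huv', hu, one_mul]; exact hDsub hv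
    · rw [Set.mem_singleton_iff] at hv
      rw [← huv', hv, mul_one]; exact hDsub hu
    · exact ⟨u, hu, v, hv, huv⟩
  · intro y hy
    obtain ⟨u, hu, v, hv, huv⟩ := hy
    exact ⟨u, by rw [hKD]; exact Or.inr hu, v, by rw [hKD]; exact Or.inr hv, huv⟩
end

section
/- Let G be a finite group and let a, b, c ∈ G be non-identity elements. Then a^G · b^G = c^G (the setwise product of the conjugacy classes of a and b equals the conjugacy class of c) if and only if for every irreducible complex character χ of G one has χ(a)·χ(b) = χ(c)·χ(1). -/
open Pointwise

namespace Lemma5Aux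

open MonoidAlgebra Finset
open scoped Classical

variable {G : Type} [Group G] [Fintype G]

lemma self_mem_conjClass (x : G) : x ∈ conjClass x := ⟨1, by simp⟩

lemma conj_mem_conjClass {x y : G} (h : y ∈ conjClass x) (g : G) :
    g⁻¹ * y * g ∈ conjClass x := by
  obtain ⟨u, rfl⟩ := h
  exact ⟨u * g, by group⟩

lemma exists_conj_of_mem {x : G} {g g' : G} (hg : g ∈ conjClass x) (hg' : g' ∈ conjClass x) :
    ∃ h : G, g' = h⁻¹ * g * h := by
  obtain ⟨u, rfl⟩ := hg
  obtain ⟨v, rfl⟩ := hg'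
  exact ⟨u⁻¹ * v, by group⟩

/-- The conjugacy class as a finset. -/
noncomputable def clF (x : G) : Finset G := Finset.univ.filter (· ∈ conjClass x)

lemma mem_clF {x y : G} : y ∈ clF x ↔ y ∈ conjClass x := by
  simp [clF]

lemma clF_card_pos (x : G) : 0 < (clF x).card :=
  Finset.card_pos.2 ⟨x, mem_clF.2 (self_mem_conjClass x)⟩

/-- The class sum in the monoid algebra. -/
noncomputable def S (x : G) : MonoidAlgebra ℂ G := ∑ y ∈ clF x, single y 1

/-- Number of ways to write `g` as a product of an element of `aᴳ` and an element of `bᴳ`. -/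
noncomputable def Nc (a b g : G) : ℕ :=
  ((clF a ×ˢ clF b).filter fun p => p.1 * p.2 = g).card

lemma coeff_S (x g : G) : (S x).coeff g = if g ∈ clF x then (1 : ℂ) else 0 := by
  rw [S, MonoidAlgebra.coeff_sum, Finsupp.finset_sum_apply]
  simp only [MonoidAlgebra.coeff_single, Finsupp.single_apply]
  rw [Finset.sum_ite_eq' (clF x) g (fun _ => (1:ℂ))]

lemma coeff_mul_S (a b g : G) : (S a * S b).coeff g = (Nc a b g : ℂ) := by
  have h1 : S a * S b = ∑ x ∈ clF a, ∑ y ∈ clF b, single (x * y) (1:ℂ) := by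
    rw [S, S, Finset.sum_mul_sum]
    simp [MonoidAlgebra.single_mul_single]
  have h2 : (S a * S b).coeff g = ∑ p ∈ clF a ×ˢ clF b, ((if p.1 * p.2 = g then (1:ℂ) else 0)) := by
    rw [h1, ← Finset.sum_product', MonoidAlgebra.coeff_sum, Finsupp.finset_sum_apply]
    refine Finset.sum_congr rfl fun p _ => ?_
    simp [MonoidAlgebra.coeff_single, Finsupp.single_apply]
  rw [h2, Finset.sum_boole, Nc]

lemma Nc_conj (a b g h : G) : Nc a b (h⁻¹ * g * h) = Nc a b g := by
  unfold Nc
  apply Finset.card_nbij' (i := fun p => (h * p.1 * h⁻¹, h * p.2 * h⁻¹))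
    (j := fun p => (h⁻¹ * p.1 * h, h⁻¹ * p.2 * h))
  · rintro ⟨x, y⟩ hxy
    simp only [Finset.mem_coe, Finset.mem_filter, Finset.mem_product, mem_clF] at hxy ⊢
    obtain ⟨⟨hx, hy⟩, hprod⟩ := hxy
    refine ⟨⟨by simpa using conj_mem_conjClass hx h⁻¹,
      by simpa using conj_mem_conjClass hy h⁻¹⟩, ?_⟩
    calc (h * x * h⁻¹) * (h * y * h⁻¹) = h * (x * y) * h⁻¹ := by group
    _ = h * (h⁻¹ * g * h) * h⁻¹ := by rw [hprod]
    _ = g := by group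
  · rintro ⟨x, y⟩ hxy
    simp only [Finset.mem_coe, Finset.mem_filter, Finset.mem_product, mem_clF] at hxy ⊢
    obtain ⟨⟨hx, hy⟩, hprod⟩ := hxy
    refine ⟨⟨conj_mem_conjClass hx h, conj_mem_conjClass hy h⟩, ?_⟩
    calc (h⁻¹ * x * h) * (h⁻¹ * y * h) = h⁻¹ * (x * y) * h := by group
    _ = h⁻¹ * g * h := by rw [hprod]
  · rintro ⟨x, y⟩ _; simp; constructor <;> group
  · rintro ⟨x, y⟩ _; simp; constructor <;> group

lemma Nc_sum (a b : G) : ∑ g : G, Nc a b g = (clF a).card * (clF b).card := by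
  rw [← Finset.card_product]
  rw [Finset.card_eq_sum_card_fiberwise (t := Finset.univ)
    (f := fun p : G × G => p.1 * p.2) (fun x _ => Finset.mem_univ _)]
  rfl

lemma Nc_eq_zero_of_not_mem {a b c : G} (h : conjClass a * conjClass b = conjClass c)
    {g : G} (hg : g ∉ conjClass c) : Nc a b g = 0 := by
  rw [Nc, Finset.card_eq_zero, Finset.filter_eq_empty_iff]
  rintro ⟨x, y⟩ hxy
  simp only [Finset.mem_product, mem_clF] at hxy
  intro hprod
  apply hg
  rw [← h, ← hprod]
  exact Set.mul_mem_mul hxy.1 hxy.2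

end Lemma5Aux

namespace Lemma5Aux
open MonoidAlgebra Finset
open scoped Classical
variable {G : Type} [Group G] [Fintype G]

lemma Nc_const {a b c : G} (h : conjClass a * conjClass b = conjClass c)
    {g : G} (hg : g ∈ conjClass c) :
    (clF c).card * Nc a b g = (clF a).card * (clF b).card := by
  have hconst : ∀ g' ∈ clF c, Nc a b g' = Nc a b g := by
    intro g' hg'
    obtain ⟨u, rfl⟩ := exists_conj_of_mem hg (mem_clF.1 hg')
    exact Nc_conj a b g u
  have hsupp : ∀ g' ∈ (Finset.univ : Finset G), g' ∉ clF c → Nc a b g' = 0 := by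
    intro g' _ hg'
    exact Nc_eq_zero_of_not_mem h (fun hmem => hg' (mem_clF.2 hmem))
  calc (clF c).card * Nc a b g = ∑ g' ∈ clF c, Nc a b g := by
        rw [Finset.sum_const, smul_eq_mul]
  _ = ∑ g' ∈ clF c, Nc a b g' := by
        exact (Finset.sum_congr rfl hconst).symm
  _ = ∑ g' : G, Nc a b g' := by
        exact Finset.sum_subset (Finset.subset_univ _) hsupp
  _ = (clF a).card * (clF b).card := Nc_sum a b

/-- From the set-theoretic equality to the class-sum identity. -/
lemma S_identity_of_set {a b c : G} (h : conjClass a * conjClass b = conjClass c) :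
    ((clF c).card : ℂ) • (S a * S b) = (((clF a).card * (clF b).card : ℕ) : ℂ) • S c := by
  apply MonoidAlgebra.coeff_injective
  apply Finsupp.ext
  intro g
  have lhs : (((clF c).card : ℂ) • (S a * S b)).coeff g = ((clF c).card : ℂ) * (Nc a b g : ℂ) := by
    rw [MonoidAlgebra.coeff_smul, Finsupp.smul_apply, coeff_mul_S, smul_eq_mul]
  have rhs : ((((clF a).card * (clF b).card : ℕ) : ℂ) • S c).coeff g
      = (((clF a).card * (clF b).card : ℕ) : ℂ) * (if g ∈ clF c then (1:ℂ) else 0) := by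
    rw [MonoidAlgebra.coeff_smul, Finsupp.smul_apply, coeff_S, smul_eq_mul]
  rw [lhs, rhs]
  by_cases hg : g ∈ clF c
  · rw [if_pos hg]
    have := Nc_const h (mem_clF.1 hg)
    push_cast [← this]
    ring
  · rw [if_neg hg]
    have := Nc_eq_zero_of_not_mem h (fun hmem => hg (mem_clF.2 hmem))
    rw [this]
    simp

/-- From the class-sum identity to the set-theoretic equality. -/
lemma set_of_S_identity {a b c : G}
    (h : ((clF c).card : ℂ) • (S a * S b) = (((clF a).card * (clF b).card : ℕ) : ℂ) • S c) :
    conjClass a * conjClass b = conjClass c := by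
  ext g
  have hg : (((clF c).card : ℂ) • (S a * S b)).coeff g
      = ((((clF a).card * (clF b).card : ℕ) : ℂ) • S c).coeff g := by rw [h]
  rw [MonoidAlgebra.coeff_smul, MonoidAlgebra.coeff_smul, Finsupp.smul_apply, Finsupp.smul_apply, coeff_mul_S, coeff_S,
    smul_eq_mul, smul_eq_mul] at hg
  have hca : ((clF a).card : ℂ) ≠ 0 := Nat.cast_ne_zero.2 (clF_card_pos a).ne'
  have hcb : ((clF b).card : ℂ) ≠ 0 := Nat.cast_ne_zero.2 (clF_card_pos b).ne'
  have hcc : ((clF c).card : ℂ) ≠ 0 := Nat.cast_ne_zero.2 (clF_card_pos c).ne'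
  have hmem : g ∈ conjClass a * conjClass b ↔ Nc a b g ≠ 0 := by
    constructor
    · rintro ⟨x, hx, y, hy, rfl⟩
      have : ((x, y) : G × G) ∈ (clF a ×ˢ clF b).filter (fun p => p.1 * p.2 = x * y) := by
        simp [Finset.mem_product, mem_clF, hx, hy]
      exact (Finset.card_pos.2 ⟨_, this⟩).ne'
    · intro hNc
      obtain ⟨⟨x, y⟩, hp⟩ := Finset.card_pos.1 (Nat.pos_of_ne_zero hNc)
      simp only [Finset.mem_filter, Finset.mem_product, mem_clF] at hp
      exact ⟨x, hp.1.1, y, hp.1.2, hp.2⟩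
  by_cases hgc : g ∈ conjClass c
  · simp only [hgc, iff_true]
    rw [hmem]
    intro hN
    rw [hN, if_pos (mem_clF.2 hgc)] at hg
    simp only [Nat.cast_zero, mul_zero, mul_one] at hg
    exact (mul_ne_zero hca hcb) (by push_cast at hg; exact hg.symm)
  · simp only [hgc, iff_false]
    rw [hmem, not_not]
    rw [if_neg (fun hx => hgc (mem_clF.1 hx)), mul_zero] at hg
    have := mul_eq_zero.1 hg
    rcases this with h0 | h0
    · exact absurd h0 hcc
    · exact_mod_cast h0

end Lemma5Aux

namespace Lemma5Aux
open CategoryTheory MonoidAlgebra Finset Module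
open scoped Classical
variable {G : Type} [Group G] [Fintype G]

/-- The action of the monoid algebra on a representation. -/
noncomputable abbrev piV (V : FDRep ℂ G) : MonoidAlgebra ℂ G →ₐ[ℂ] ((V : Type) →ₗ[ℂ] V) :=
  Representation.asAlgebraHom V.ρ

lemma pi_S (V : FDRep ℂ G) (x : G) :
    piV V (S x) = ∑ y ∈ clF x, (V.ρ y : (V : Type) →ₗ[ℂ] V) := by
  rw [S, map_sum]
  exact Finset.sum_congr rfl fun y _ => Representation.asAlgebraHom_single_one _ y

lemma char_eq_of_mem {V : FDRep ℂ G} {x y : G} (h : y ∈ conjClass x) :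
    V.character y = V.character x := by
  obtain ⟨g, rfl⟩ := h
  have := FDRep.char_conj V x g⁻¹
  simpa using this

lemma trace_pi_S (V : FDRep ℂ G) (x : G) :
    LinearMap.trace ℂ V (piV V (S x)) = ((clF x).card : ℂ) * V.character x := by
  rw [pi_S, map_sum]
  have : ∀ y ∈ clF x, LinearMap.trace ℂ V (V.ρ y) = V.character x := by
    intro y hy
    exact char_eq_of_mem (mem_clF.1 hy)
  rw [Finset.sum_congr rfl this, Finset.sum_const, nsmul_eq_mul]

lemma pi_S_comm (V : FDRep ℂ G) (x g : G) :
    piV V (S x) * V.ρ g = V.ρ g * piV V (S x) := by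
  rw [pi_S, Finset.sum_mul, Finset.mul_sum]
  simp_rw [← map_mul]
  apply Finset.sum_nbij' (i := fun y => g⁻¹ * y * g) (j := fun y => g * y * g⁻¹)
  · intro y hy; exact mem_clF.2 (conj_mem_conjClass (mem_clF.1 hy) g)
  · intro y hy
    have := conj_mem_conjClass (mem_clF.1 hy) g⁻¹
    simpa using mem_clF.2 (by simpa using this)
  · intro y _; group
  · intro y _; group
  · intro y _
    congr 1
    group

/-- The class sum as an endomorphism of a representation, in the category `FDRep ℂ G`. -/
noncomputable def csHom (x : G) (V : FDRep ℂ G) : V ⟶ V :=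
  ⟨InducedCategory.homMk (ModuleCat.ofHom (piV V (S x))), fun g => by
    ext v
    change piV V (S x) (V.ρ g v) = V.ρ g (piV V (S x) v)
    have := DFunLike.congr_fun (pi_S_comm V x g) v
    exact this⟩

lemma csHom_hom (x : G) (V : FDRep ℂ G) :
    ((csHom x V).hom.hom.hom : (V : Type) →ₗ[ℂ] V) = piV V (S x) := rfl

/-- Schur's lemma: endomorphisms of a simple object are scalars. -/
lemma exists_smul_id (V : FDRep ℂ G) [Simple V] (f : V ⟶ V) : ∃ μ : ℂ, f = μ • 𝟙 V := by
  have h1 : finrank ℂ (V ⟶ V) = 1 := by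
    rw [FDRep.finrank_hom_simple_simple V V, if_pos ⟨Iso.refl V⟩]
  obtain ⟨μ, hμ⟩ := (finrank_eq_one_iff_of_nonzero' (𝟙 V) (id_nonzero V)).1 h1 f
  exact ⟨μ, hμ.symm⟩

lemma char_one_ne_zero (V : FDRep ℂ G) [Simple V] : V.character 1 ≠ 0 := by
  rw [FDRep.char_one]
  simp only [ne_eq, Nat.cast_eq_zero]
  intro h0
  have : Subsingleton V := (Module.finrank_zero_iff (R := ℂ) (M := V)).1 h0
  apply id_nonzero V
  apply Action.hom_ext
  ext v
  exact @Subsingleton.elim _ this _ _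

/-- The scalar by which a class sum acts on a simple representation. -/
lemma exists_nu (V : FDRep ℂ G) [Simple V] (x : G) :
    ∃ ν : ℂ, piV V (S x) = ν • LinearMap.id ∧
      ν * V.character 1 = ((clF x).card : ℂ) * V.character x := by
  obtain ⟨μ, hμ⟩ := exists_smul_id V (csHom x V)
  refine ⟨μ, ?_, ?_⟩
  · have := congrArg (fun f : V ⟶ V => f.hom.hom.hom) hμ
    rw [csHom_hom] at this
    exact this
  · have htr : LinearMap.trace ℂ V (piV V (S x)) = μ * V.character 1 := by
      have := congrArg (fun f : V ⟶ V => f.hom.hom.hom) hμ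
      rw [csHom_hom] at this
      rw [this]
      have : ((μ • 𝟙 V : V ⟶ V).hom.hom.hom : (V : Type) →ₗ[ℂ] V) = μ • LinearMap.id := rfl
      rw [this, map_smul, LinearMap.trace_id, FDRep.char_one, smul_eq_mul]
    rw [← htr, trace_pi_S]

end Lemma5Aux

namespace Lemma5Aux
open CategoryTheory MonoidAlgebra Finset Module
open scoped Classical
variable {G : Type} [Group G] [Fintype G]

/-- Restriction of a representation to an invariant subspace. -/
noncomputable def subRep (Y : FDRep ℂ G) (p : Submodule ℂ Y)
    (hp : ∀ g : G, ∀ v ∈ p, Y.ρ g v ∈ p) : Representation ℂ G p where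
  toFun g := (Y.ρ g).restrict (fun v hv => hp g v hv)
  map_one' := by
    ext v
    simp [LinearMap.restrict_apply]
  map_mul' g h := by
    ext v
    simp [LinearMap.restrict_apply]

/-- The inclusion of an invariant subspace, as a morphism in `FDRep`. -/
noncomputable def subRepIncl (Y : FDRep ℂ G) (p : Submodule ℂ Y)
    (hp : ∀ g : G, ∀ v ∈ p, Y.ρ g v ∈ p) : FDRep.of (subRep Y p hp) ⟶ Y :=
  ⟨InducedCategory.homMk (ModuleCat.ofHom p.subtype), fun g => by ext v; rfl⟩

lemma commApply {Y V : FDRep ℂ G} (f : Y ⟶ V) (g : G) (v : Y) :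
    f.hom.hom.hom (Y.ρ g v) = V.ρ g (f.hom.hom.hom v) := by
  have := congrArg (fun h => h.hom.hom v) (f.comm g)
  simpa using this

/-- A nontrivial representation with no nontrivial invariant subspace is a simple object. -/
lemma simple_of_invariant (V : FDRep ℂ G) (hnt : Nontrivial V)
    (h : ∀ p : Submodule ℂ V, (∀ g : G, ∀ v ∈ p, V.ρ g v ∈ p) → p = ⊥ ∨ p = ⊤) :
    Simple V := by
  constructor
  intro Y f hmono
  constructor
  · intro hiso h0
    obtain ⟨x, y, hxy⟩ := hnt
    apply hxy
    have hid : (𝟙 V : V ⟶ V) = 0 := by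
      calc (𝟙 V : V ⟶ V) = inv f ≫ f := (IsIso.inv_hom_id f).symm
      _ = inv f ≫ 0 := congrArg (CategoryStruct.comp (inv f)) h0
      _ = 0 := Limits.comp_zero
    have hid' : (LinearMap.id : (V : Type) →ₗ[ℂ] V) = 0 := congrArg (fun f : V ⟶ V => f.hom.hom.hom) hid
    have hx : x = 0 := congrFun (congrArg DFunLike.coe hid') x
    have hy : y = 0 := congrFun (congrArg DFunLike.coe hid') y
    rw [hx, hy]
  · intro hne
    have hker : LinearMap.ker (f.hom.hom.hom : (Y : Type) →ₗ[ℂ] V) = ⊥ := by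
      set p := LinearMap.ker (f.hom.hom.hom : (Y : Type) →ₗ[ℂ] V) with hp
      have hinv : ∀ g : G, ∀ v ∈ p, Y.ρ g v ∈ p := by
        intro g v hv
        have := commApply f g v
        simp only [hp, LinearMap.mem_ker] at hv ⊢
        change f.hom.hom.hom (Y.ρ g v) = 0
        calc f.hom.hom.hom (Y.ρ g v) = V.ρ g (f.hom.hom.hom v) := commApply f g v
        _ = V.ρ g 0 := by rw [show f.hom.hom.hom v = 0 from hv]
        _ = 0 := map_zero _
      have hcomp : subRepIncl Y p hinv ≫ f = 0 := by
        apply Action.hom_ext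
        ext ⟨v, hv⟩
        exact hv
      have hzero : subRepIncl Y p hinv = 0 := by
        have h2 : subRepIncl Y p hinv ≫ f = 0 ≫ f := by rw [hcomp, Limits.zero_comp]
        exact Mono.right_cancellation _ _ h2
      rw [Submodule.eq_bot_iff]
      intro v hv
      have : (subRepIncl Y p hinv).hom.hom.hom ⟨v, hv⟩ = v := rfl
      rw [← this, hzero]
      rfl
    have hrange : LinearMap.range (f.hom.hom.hom : (Y : Type) →ₗ[ℂ] V) = ⊤ := by
      have hinv2 : ∀ g : G, ∀ v ∈ LinearMap.range (f.hom.hom.hom : (Y : Type) →ₗ[ℂ] V),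
          V.ρ g v ∈ LinearMap.range (f.hom.hom.hom : (Y : Type) →ₗ[ℂ] V) := by
        rintro g v ⟨w, rfl⟩
        exact ⟨Y.ρ g w,
          show (f.hom.hom.hom : (Y : Type) →ₗ[ℂ] V) (Y.ρ g w) = V.ρ g (f.hom.hom.hom w) from
            commApply f g w⟩
      rcases h (LinearMap.range f.hom.hom.hom) hinv2 with h1 | h2
      · exfalso
        exact hne (Action.hom_ext _ _ (by ext v; exact LinearMap.congr_fun (LinearMap.range_eq_bot.1 h1) v))
      · exact h2
    have hbij : Function.Bijective (f.hom.hom.hom : (Y : Type) →ₗ[ℂ] V) :=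
      ⟨LinearMap.ker_eq_bot.1 hker, LinearMap.range_eq_top.1 hrange⟩
    let e := LinearEquiv.ofBijective (f.hom.hom.hom : (Y : Type) →ₗ[ℂ] V) hbij
    have hcomm : ∀ g : G, ∀ v : V, e.symm (V.ρ g v) = Y.ρ g (e.symm v) := by
      intro g v
      apply e.injective
      rw [e.apply_symm_apply]
      calc V.ρ g v = V.ρ g (e (e.symm v)) := by rw [e.apply_symm_apply]
      _ = V.ρ g (f.hom.hom.hom (e.symm v)) := rfl
      _ = f.hom.hom.hom (Y.ρ g (e.symm v)) := (commApply f g (e.symm v)).symm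
      _ = e (Y.ρ g (e.symm v)) := rfl
    refine ⟨⟨⟨InducedCategory.homMk (ModuleCat.ofHom e.symm.toLinearMap), fun g => ?_⟩, ?_, ?_⟩⟩
    · ext v
      exact hcomm g v
    · apply Action.hom_ext
      ext v
      exact e.symm_apply_apply v
    · apply Action.hom_ext
      ext v
      exact e.apply_symm_apply v

end Lemma5Aux

namespace Lemma5Aux
open CategoryTheory MonoidAlgebra Finset Module
open scoped Classical
variable {G : Type} [Group G] [Fintype G]

noncomputable instance : FiniteDimensional ℂ (MonoidAlgebra ℂ G) :=
  inferInstance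

noncomputable instance (W : Submodule (MonoidAlgebra ℂ G) (MonoidAlgebra ℂ G)) :
    FiniteDimensional ℂ W :=
  FiniteDimensional.of_injective ((W.subtype).restrictScalars ℂ) (fun _ _ h => Subtype.ext h)

section OfModule

variable (M : Type) [AddCommGroup M] [Module ℂ M] [Module (MonoidAlgebra ℂ G) M]
  [IsScalarTower ℂ (MonoidAlgebra ℂ G) M]

lemma ofModule'_apply (g : G) (m : M) :
    Representation.ofModule' (k := ℂ) (G := G) M g m = MonoidAlgebra.of ℂ G g • m := by
  rw [Representation.ofModule', MonoidAlgebra.lift_symm_apply]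
  rfl

lemma asAlgebraHom_ofModule' (z : MonoidAlgebra ℂ G) (m : M) :
    Representation.asAlgebraHom (Representation.ofModule' (k := ℂ) (G := G) M) z m = z • m := by
  induction z using MonoidAlgebra.induction_on with
  | of g =>
    rw [Representation.asAlgebraHom_of, ofModule'_apply]
  | add f g hf hg =>
    rw [map_add, LinearMap.add_apply, hf, hg, add_smul]
  | smul r f hf =>
    rw [map_smul, LinearMap.smul_apply, hf, smul_assoc]

end OfModule

/-- An element of the monoid algebra acting as zero on every simple object is zero. -/
lemma eq_zero_of_pi_simple (z : MonoidAlgebra ℂ G)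
    (hz : ∀ V : FDRep ℂ G, Simple V → piV V z = 0) : z = 0 := by
  haveI : NeZero ((Fintype.card G : ℂ)) := ⟨Nat.cast_ne_zero.2 Fintype.card_ne_zero⟩
  have hw : ∀ w : MonoidAlgebra ℂ G, z * w = 0 := by
    intro w
    have hw_top : w ∈ (⊤ : Submodule (MonoidAlgebra ℂ G) (MonoidAlgebra ℂ G)) := trivial
    rw [← IsSemisimpleModule.sSup_simples_eq_top (MonoidAlgebra ℂ G) (MonoidAlgebra ℂ G),
      sSup_eq_iSup'] at hw_top
    refine Submodule.iSup_induction (motive := fun w => z * w = 0) _ hw_top ?_ (by simp) ?_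
    · rintro ⟨W, hW⟩ x hx
      haveI : IsSimpleModule (MonoidAlgebra ℂ G) W := hW
      haveI : Nontrivial W := IsSimpleModule.nontrivial (MonoidAlgebra ℂ G) W
      set V : FDRep ℂ G := FDRep.of (Representation.ofModule' (k := ℂ) (G := G) W) with hV
      have hρ : ∀ g : G, ∀ v : W, V.ρ g v = MonoidAlgebra.of ℂ G g • v := fun g v =>
        ofModule'_apply (W : Type) g v
      have hsimple : Simple V := by
        apply simple_of_invariant V (by exact inferInstanceAs (Nontrivial W))
        intro p hp
        let q : Submodule (MonoidAlgebra ℂ G) W :=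
          { carrier := (p : Set (CoeSort.coe V))
            add_mem' := fun ha hb => p.add_mem ha hb
            zero_mem' := p.zero_mem
            smul_mem' := by
              intro z' v hv
              induction z' using MonoidAlgebra.induction_on with
              | of g =>
                have := hp g v hv
                rw [hρ g v] at this
                exact this
              | add f g hf hg =>
                rw [add_smul]; exact p.add_mem hf hg
              | smul r f hf =>
                rw [smul_assoc]; exact p.smul_mem r hf }
        rcases eq_bot_or_eq_top q with hq | hq
        · left
          rw [Submodule.eq_bot_iff]
          intro v hv
          have : v ∈ q := hv
          rw [hq] at this
          exact this
        · right
          rw [Submodule.eq_top_iff']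
          intro v
          have : v ∈ q := by rw [hq]; trivial
          exact this
      have hz' := hz V hsimple
      have heval : piV V z ⟨x, hx⟩ = z • (⟨x, hx⟩ : W) :=
        asAlgebraHom_ofModule' (W : Type) z ⟨x, hx⟩
      have h0 : z • (⟨x, hx⟩ : W) = 0 := by
        rw [← heval, hz']
        rfl
      have h1 : z • x = 0 := congrArg Subtype.val h0
      rw [← smul_eq_mul]
      exact h1
    · intro x y hx hy
      rw [mul_add, hx, hy, add_zero]
  have := hw 1
  rwa [mul_one] at this

end Lemma5Aux

open CategoryTheory Lemma5Aux

/-- **Lemma 5.** For non-identity elements `a, b, c` of a finite group `G`, the product of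
the conjugacy classes of `a` and `b` equals the conjugacy class of `c` if and only if every
irreducible complex character `χ` of `G` satisfies `χ(a)·χ(b) = χ(c)·χ(1)`. -/
theorem product_of_classes_char_criterion
    (G : Type) [Group G] [Fintype G] (a b c : G)
    (ha : a ≠ 1) (hb : b ≠ 1) (hc : c ≠ 1) :
    conjClass a * conjClass b = conjClass c ↔
      ∀ V : FDRep ℂ G, CategoryTheory.Simple V →
        (V.character a) * (V.character b) = (V.character c) * (V.character 1) := by
  have hκa : ((clF a).card : ℂ) ≠ 0 := Nat.cast_ne_zero.2 (clF_card_pos a).ne'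
  have hκb : ((clF b).card : ℂ) ≠ 0 := Nat.cast_ne_zero.2 (clF_card_pos b).ne'
  have hκc : ((clF c).card : ℂ) ≠ 0 := Nat.cast_ne_zero.2 (clF_card_pos c).ne'
  constructor
  · intro h V hs
    haveI := hs
    have hS := S_identity_of_set (a := a) (b := b) (c := c) h
    obtain ⟨νa, hνa, hνa'⟩ := exists_nu V a
    have happ := congrArg (piV V) hS
    rw [map_smul, map_smul, map_mul, hνa] at happ
    have hmul0 : (νa • (LinearMap.id : (V : Type) →ₗ[ℂ] V)) * piV V (S b)
        = νa • piV V (S b) := by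
      ext v
      simp [Module.End.mul_apply]
    rw [hmul0] at happ
    have htr := congrArg (LinearMap.trace ℂ V) happ
    rw [map_smul, map_smul, map_smul, trace_pi_S, trace_pi_S, smul_eq_mul, smul_eq_mul,
      smul_eq_mul] at htr
    -- htr : κc * (νa * (κb * χb)) = κaκb * (κc * χc)
    have h2 : νa * V.character b = ((clF a).card : ℂ) * V.character c := by
      have hne : ((clF c).card : ℂ) * ((clF b).card : ℂ) ≠ 0 := mul_ne_zero hκc hκb
      apply mul_left_cancel₀ hne
      push_cast at htr ⊢
      linear_combination htr
    have h3 : (νa * V.character 1) * V.character b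
        = ((clF a).card : ℂ) * (V.character c * V.character 1) := by
      calc (νa * V.character 1) * V.character b
          = (νa * V.character b) * V.character 1 := by ring
      _ = (((clF a).card : ℂ) * V.character c) * V.character 1 := by rw [h2]
      _ = ((clF a).card : ℂ) * (V.character c * V.character 1) := by ring
    rw [hνa'] at h3
    apply mul_left_cancel₀ hκa
    calc ((clF a).card : ℂ) * (V.character a * V.character b)
        = (((clF a).card : ℂ) * V.character a) * V.character b := by ring
    _ = ((clF a).card : ℂ) * (V.character c * V.character 1) := h3
    _ = ((clF a).card : ℂ) * (V.character c * V.character 1) := rfl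
  · intro hchi
    apply set_of_S_identity
    have hz0 : ((clF c).card : ℂ) • (S a * S b)
        - (((clF a).card * (clF b).card : ℕ) : ℂ) • S c = 0 := by
      apply eq_zero_of_pi_simple
      intro V hs
      haveI := hs
      obtain ⟨νa, hνa, hνa'⟩ := exists_nu V a
      obtain ⟨νb, hνb, hνb'⟩ := exists_nu V b
      obtain ⟨νc, hνc, hνc'⟩ := exists_nu V c
      rw [map_sub, map_smul, map_smul, map_mul, hνa, hνb, hνc]
      have hmul : (νa • (LinearMap.id : (V : Type) →ₗ[ℂ] V)) * (νb • LinearMap.id)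
          = (νa * νb) • LinearMap.id := by
        ext v
        simp only [Module.End.mul_apply, LinearMap.smul_apply, LinearMap.id_apply, smul_smul]
      rw [hmul, smul_smul, smul_smul]
      rw [sub_eq_zero]
      congr 1
      -- scalars equal
      have hχ1 : V.character 1 ≠ 0 := char_one_ne_zero V
      have key := hchi V hs
      have e1 : (((clF c).card : ℂ) * (νa * νb)) * (V.character 1 * V.character 1)
          = ((((clF a).card * (clF b).card : ℕ) : ℂ) * νc) * (V.character 1 * V.character 1) := by
        push_cast
        calc (((clF c).card : ℂ) * (νa * νb)) * (V.character 1 * V.character 1)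
            = ((clF c).card : ℂ) * ((νa * V.character 1) * (νb * V.character 1)) := by ring
        _ = ((clF c).card : ℂ) * ((((clF a).card : ℂ) * V.character a)
              * (((clF b).card : ℂ) * V.character b)) := by rw [hνa', hνb']
        _ = (((clF a).card : ℂ) * ((clF b).card : ℂ))
              * (((clF c).card : ℂ) * (V.character a * V.character b)) := by ring
        _ = (((clF a).card : ℂ) * ((clF b).card : ℂ))
              * (((clF c).card : ℂ) * (V.character c * V.character 1)) := by rw [key]
        _ = (((clF a).card : ℂ) * ((clF b).card : ℂ))
              * ((νc * V.character 1) * V.character 1) := by rw [hνc']; ring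
        _ = (((clF a).card : ℂ) * ((clF b).card : ℂ) * νc)
              * (V.character 1 * V.character 1) := by ring
      exact mul_right_cancel₀ (mul_ne_zero hχ1 hχ1) e1
    have := sub_eq_zero.1 hz0
    exact this
end
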